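/- arXiv:2112.00750 — 8 statements merged into one kernel-verified Lean document; each statement's English description precedes it below -/
import Mathlib

section
/- For every real b > 0, setting A = (b + b⁻¹)²/4 (corresponding to central charge c = 1 + 6(b + b⁻¹)² ≥ 25 with A = (c−1)/24), and for every t > 0, the reduced vacuum character decomposes into reduced boundary characters with strictly positive density: t^{1/4}·e^{2πtA}·(1 − e^{−2πt}) = ∫_A^∞ [2√2·sinh(2πb·√(h−A))·sinh(2πb⁻¹·√(h−A)) / √(h−A)] · t^{−1/4}·e^{−(2π/t)(h−A)} dh, and the density 2√2·sinh(2πb·√(h−A))·sinh(2πb⁻¹·√(h−A))/√(h−A) is strictly positive for all h > A. -/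
open Real MeasureTheory Set

private lemma gauss_lin_integrable {m k : ℝ} (hk : 0 < k) :
    Integrable (fun x : ℝ => exp (m*x - k*x^2)) := by
  have h1 : ∀ x : ℝ, m*x - k*x^2 = -k*(x - m/(2*k))^2 + m^2/(4*k) := by
    intro x; field_simp; ring
  simp_rw [h1, Real.exp_add]
  exact ((integrable_exp_neg_mul_sq hk).comp_sub_right (m/(2*k))).mul_const _

private lemma gauss_lin {m k : ℝ} (hk : 0 < k) :
    ∫ x : ℝ, exp (m*x - k*x^2) = Real.sqrt (π/k) * exp (m^2/(4*k)) := by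
  have h1 : ∀ x : ℝ, m*x - k*x^2 = -k*(x - m/(2*k))^2 + m^2/(4*k) := by
    intro x; field_simp; ring
  simp_rw [h1, Real.exp_add]
  rw [MeasureTheory.integral_mul_const]
  rw [show (∫ x : ℝ, exp (-k*(x - m/(2*k))^2)) = ∫ x : ℝ, exp (-k*x^2) from
    integral_sub_right_eq_self (fun x => exp (-k*x^2)) (m/(2*k))]
  rw [integral_gaussian]

private lemma cosh_integrand_eq (m k : ℝ) :
    (fun u : ℝ => (exp (m*u) + exp (-(m*u))) * exp (-k*u^2))
      = (fun u : ℝ => exp (m*u - k*u^2) + exp ((-m)*u - k*u^2)) := by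
  funext u
  rw [add_mul, ← Real.exp_add, ← Real.exp_add]
  ring_nf

private lemma gauss_cosh_integrable {m k : ℝ} (hk : 0 < k) :
    Integrable (fun u : ℝ => (exp (m*u) + exp (-(m*u))) * exp (-k*u^2)) := by
  rw [cosh_integrand_eq]
  exact (gauss_lin_integrable hk).add (gauss_lin_integrable hk)

private lemma gauss_cosh {m k : ℝ} (hk : 0 < k) :
    ∫ u in Ioi (0:ℝ), (exp (m*u) + exp (-(m*u))) * exp (-k*u^2)
      = Real.sqrt (π/k) * exp (m^2/(4*k)) := by
  have hrefl : (∫ u in Ioi (0:ℝ), exp ((-m)*u - k*u^2))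
      = ∫ u in Iic (0:ℝ), exp (m*u - k*u^2) := by
    have h := integral_comp_neg_Ioi (0:ℝ) (fun x => exp (m*x - k*x^2))
    simp only [neg_zero] at h
    rw [← h]
    refine setIntegral_congr_fun measurableSet_Ioi (fun u _ => ?_)
    show exp ((-m)*u - k*u^2) = exp (m*(-u) - k*(-u)^2)
    ring_nf
  have hint : Integrable (fun x : ℝ => exp (m*x - k*x^2)) := gauss_lin_integrable hk
  have hint2 : Integrable (fun x : ℝ => exp ((-m)*x - k*x^2)) := gauss_lin_integrable hk
  calc ∫ u in Ioi (0:ℝ), (exp (m*u) + exp (-(m*u))) * exp (-k*u^2)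
      = ∫ u in Ioi (0:ℝ), (exp (m*u - k*u^2) + exp ((-m)*u - k*u^2)) := by
        rw [cosh_integrand_eq]
    _ = (∫ u in Ioi (0:ℝ), exp (m*u - k*u^2)) + ∫ u in Ioi (0:ℝ), exp ((-m)*u - k*u^2) :=
        integral_add hint.integrableOn hint2.integrableOn
    _ = (∫ u in Iic (0:ℝ), exp (m*u - k*u^2)) + ∫ u in Ioi (0:ℝ), exp (m*u - k*u^2) := by
        rw [hrefl]; ring
    _ = ∫ x : ℝ, exp (m*x - k*x^2) :=
        intervalIntegral.integral_Iic_add_Ioi hint.integrableOn hint.integrableOn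
    _ = Real.sqrt (π/k) * exp (m^2/(4*k)) := gauss_lin hk

private lemma four_sinh_sinh (x y : ℝ) :
    4 * (Real.sinh x * Real.sinh y)
      = (exp (x+y) + exp (-(x+y))) - (exp (x-y) + exp (-(x-y))) := by
  simp only [Real.sinh_eq, Real.exp_add, Real.exp_sub, Real.exp_neg]
  field_simp
  ring

private lemma vac_char_aux (b : ℝ) (hb : 0 < b)
    (A : ℝ) (hA : A = (b + b⁻¹) ^ 2 / 4) (t : ℝ) (ht : 0 < t) :
    t ^ ((1 : ℝ) / 4) * Real.exp (2 * π * t * A) * (1 - Real.exp (-(2 * π * t)))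
        = ∫ h in Set.Ioi A,
            (2 * Real.sqrt 2 * Real.sinh (2 * π * b * Real.sqrt (h - A)) *
                Real.sinh (2 * π * b⁻¹ * Real.sqrt (h - A)) / Real.sqrt (h - A)) *
              (t ^ (-(1 : ℝ) / 4) * Real.exp (-(2 * π / t) * (h - A))) := by
  set k : ℝ := 2 * π / t with hk
  have hkpos : 0 < k := by positivity
  set a : ℝ := 2 * π * b with ha
  set c : ℝ := 2 * π * b⁻¹ with hc
  set F : ℝ → ℝ := fun x =>
    (2 * Real.sqrt 2 * Real.sinh (a * Real.sqrt x) * Real.sinh (c * Real.sqrt x)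
      / Real.sqrt x) * (t ^ (-(1 : ℝ) / 4) * Real.exp (-k * x)) with hF
  -- Step 1: translation
  have step1 : (∫ h in Ioi A, F (h - A)) = ∫ x in Ioi (0:ℝ), F x := by
    have : ∀ h : ℝ, (Ioi A).indicator (fun h => F (h - A)) h
        = (Ioi (0:ℝ)).indicator F (h - A) := by
      intro h
      by_cases hh : h ∈ Ioi A
      · rw [indicator_of_mem hh, indicator_of_mem (by simpa [sub_pos] using hh)]
      · rw [indicator_of_notMem hh, indicator_of_notMem (by simpa [sub_pos] using hh)]
    rw [← integral_indicator measurableSet_Ioi, ← integral_indicator measurableSet_Ioi]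
    simp_rw [this]
    exact integral_sub_right_eq_self ((Ioi (0:ℝ)).indicator F) A
  show _ = ∫ h in Ioi A, F (h - A)
  rw [step1]
  -- Step 2: substitution x = u^2
  have step2 : (∫ x in Ioi (0:ℝ), F x)
      = ∫ u in Ioi (0:ℝ), ((2:ℝ) * u ^ ((2:ℝ)-1)) • F (u ^ (2:ℝ)) :=
    (integral_comp_rpow_Ioi_of_pos (g := F) (p := 2) two_pos).symm
  rw [step2]
  -- Step 3: pointwise rewrite of the integrand
  set T : ℝ := t ^ (-(1:ℝ)/4) with hT
  have step3 : (∫ u in Ioi (0:ℝ), ((2:ℝ) * u ^ ((2:ℝ)-1)) • F (u ^ (2:ℝ)))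
      = ∫ u in Ioi (0:ℝ), Real.sqrt 2 * T *
          (((exp ((a+c)*u) + exp (-((a+c)*u))) * exp (-k*u^2))
            - ((exp ((a-c)*u) + exp (-((a-c)*u))) * exp (-k*u^2))) := by
    refine setIntegral_congr_fun measurableSet_Ioi (fun u hu => ?_)
    have hu0 : (0:ℝ) < u := hu
    have hu2 : (u:ℝ) ^ (2:ℝ) = u ^ 2 := Real.rpow_two u ▸ (Real.rpow_natCast u 2)
    have hsq : Real.sqrt (u ^ 2) = u := Real.sqrt_sq hu0.le
    have h4 : 4 * (Real.sinh (a*u) * Real.sinh (c*u))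
        = (exp ((a+c)*u) + exp (-((a+c)*u))) - (exp ((a-c)*u) + exp (-((a-c)*u))) := by
      have h := four_sinh_sinh (a*u) (c*u)
      rw [← add_mul, ← sub_mul] at h
      exact h
    have h1 : ((2:ℝ)-1 : ℝ) = 1 := by norm_num
    rw [smul_eq_mul, hF]
    simp only [hu2, hsq, h1, Real.rpow_one, neg_mul]
    field_simp
    linear_combination (norm := ring_nf) T * h4
  rw [step3]
  -- Step 4: evaluate the two Gaussian integrals
  have hint1 := gauss_cosh_integrable (m := a+c) hkpos
  have hint2 := gauss_cosh_integrable (m := a-c) hkpos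
  rw [MeasureTheory.integral_const_mul,
    integral_sub hint1.integrableOn hint2.integrableOn,
    gauss_cosh hkpos, gauss_cosh hkpos]
  -- Step 5: final algebra
  have hbne : b ≠ 0 := hb.ne'
  have htne : t ≠ 0 := ht.ne'
  have hπ : (π:ℝ) ≠ 0 := pi_ne_zero
  have e1 : (a+c)^2/(4*k) = 2*π*t*A := by
    rw [hA, ha, hc, hk]; field_simp
  have e2 : (a-c)^2/(4*k) = 2*π*t*A + -(2*π*t) := by
    rw [hA, ha, hc, hk]; field_simp; ring
  have e3 : (π:ℝ)/k = t/2 := by rw [hk]; field_simp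
  rw [e1, e2, e3, Real.exp_add]
  have e4 : Real.sqrt 2 * Real.sqrt (t/2) = t ^ ((1:ℝ)/2) := by
    rw [← Real.sqrt_mul (by norm_num : (0:ℝ) ≤ 2), show (2:ℝ)*(t/2) = t by ring,
      Real.sqrt_eq_rpow]
  have e5 : t ^ ((1:ℝ)/4) = T * t ^ ((1:ℝ)/2) := by
    rw [hT, ← Real.rpow_add ht]; norm_num
  rw [e5]
  linear_combination (-(T * rexp (2*π*t*A) * (1 - rexp (-(2*π*t))))) * e4

/-- **Decomposition of the reduced vacuum character into reduced boundary characters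
(`c ≥ 25`, real Liouville parameter `b > 0`).**
With `A = (b + b⁻¹)²/4` (so `c = 1 + 6(b + b⁻¹)² ≥ 25`, `A = (c−1)/24`), for every `t > 0`
`χ̂_vac(t) = ∫_A^∞ [2√2·sinh(2πb√(h−A))·sinh(2πb⁻¹√(h−A))/√(h−A)] · χ̂_h(1/t) dh`,
and the density is strictly positive for every `h > A`. -/
theorem vacuum_character_crossing_decomposition_real_b (b : ℝ) (hb : 0 < b)
    (A : ℝ) (hA : A = (b + b⁻¹) ^ 2 / 4) :
    (∀ t : ℝ, 0 < t →
      t ^ ((1 : ℝ) / 4) * Real.exp (2 * π * t * A) * (1 - Real.exp (-(2 * π * t)))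
        = ∫ h in Set.Ioi A,
            (2 * Real.sqrt 2 * Real.sinh (2 * π * b * Real.sqrt (h - A)) *
                Real.sinh (2 * π * b⁻¹ * Real.sqrt (h - A)) / Real.sqrt (h - A)) *
              (t ^ (-(1 : ℝ) / 4) * Real.exp (-(2 * π / t) * (h - A)))) ∧
    (∀ h : ℝ, A < h →
      0 < 2 * Real.sqrt 2 * Real.sinh (2 * π * b * Real.sqrt (h - A)) *
            Real.sinh (2 * π * b⁻¹ * Real.sqrt (h - A)) / Real.sqrt (h - A)) := by
  refine ⟨fun t ht => vac_char_aux b hb A hA t ht, fun h hh => ?_⟩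
  have hx : 0 < h - A := sub_pos.2 hh
  have hs : 0 < Real.sqrt (h - A) := Real.sqrt_pos.2 hx
  have s1 : 0 < Real.sinh (2 * π * b * Real.sqrt (h - A)) :=
    Real.sinh_pos_iff.2 (by positivity)
  have s2 : 0 < Real.sinh (2 * π * b⁻¹ * Real.sqrt (h - A)) :=
    Real.sinh_pos_iff.2 (by positivity)
  positivity
end

section
/- For every θ ∈ (0, π/2), setting A = cos²θ (corresponding to central charge c = 1 + 24cos²θ ∈ (1, 25) with A = (c−1)/24), and for every t > 0, one has t^{1/4}·e^{2πtA}·(1 − e^{−2πt}) = ∫_A^∞ [√2·(cosh(4π·cosθ·√(h−A)) − cos(4π·sinθ·√(h−A))) / √(h−A)] · t^{−1/4}·e^{−(2π/t)(h−A)} dh, and the density √2·(cosh(4π·cosθ·√(h−A)) − cos(4π·sinθ·√(h−A)))/√(h−A) is strictly positive for all h > A. (This is the decomposition of the reduced vacuum character into reduced boundary characters for 1 < c < 25, where the Liouville parameter b = e^{iθ} is a pure phase; positivity of the density for all c > 1 is what forbids an upper bound on g when the boundary gap is below (c−1)/24.) -/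
open Real MeasureTheory

lemma gauss_integrable_aux (a : ℝ) (ha : 0 < a) (c : ℂ) :
    Integrable (fun x : ℝ => Complex.exp (-(a:ℂ) * x ^ 2 + c * x)) := by
  have hb : (-(a:ℂ)).re < 0 := by simpa using ha
  simpa using integrable_cexp_quadratic' hb c 0

lemma gauss_integral_aux (a : ℝ) (ha : 0 < a) (c : ℂ) :
    ∫ x : ℝ, Complex.exp (-(a:ℂ) * x ^ 2 + c * x)
      = ((Real.sqrt (π / a) : ℝ) : ℂ) * Complex.exp (c ^ 2 / (4 * a)) := by
  have hb : (-(a:ℂ)).re < 0 := by simpa using ha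
  have h := integral_cexp_quadratic hb c 0
  simp only [add_zero, zero_sub, neg_neg] at h
  rw [h]
  congr 1
  · rw [Real.sqrt_eq_rpow, Complex.ofReal_cpow (by positivity)]
    push_cast
    norm_num
  · congr 1
    have : (a:ℂ) ≠ 0 := by exact_mod_cast ha.ne'
    field_simp


lemma gauss_cosh_cos (a B C : ℝ) (ha : 0 < a) :
    ∫ x : ℝ, (Real.cosh (B * x) - Real.cos (C * x)) * Real.exp (-a * x ^ 2)
      = Real.sqrt (π / a) * (Real.exp (B ^ 2 / (4 * a)) - Real.exp (-(C ^ 2 / (4 * a)))) := by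
  have key : (∫ x : ℝ, (((Real.cosh (B * x) - Real.cos (C * x)) * Real.exp (-a * x ^ 2) : ℝ) : ℂ))
      = ((Real.sqrt (π / a) * (Real.exp (B ^ 2 / (4 * a)) - Real.exp (-(C ^ 2 / (4 * a)))) : ℝ) : ℂ) := by
    have hsplit : ∀ x : ℝ,
        (((Real.cosh (B * x) - Real.cos (C * x)) * Real.exp (-a * x ^ 2) : ℝ) : ℂ)
          = (1/2 : ℂ) * Complex.exp (-(a:ℂ) * x ^ 2 + (B:ℂ) * x)
            + (1/2 : ℂ) * Complex.exp (-(a:ℂ) * x ^ 2 + (-(B:ℂ)) * x)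
            - ((1/2 : ℂ) * Complex.exp (-(a:ℂ) * x ^ 2 + ((C:ℂ) * Complex.I) * x)
              + (1/2 : ℂ) * Complex.exp (-(a:ℂ) * x ^ 2 + (-((C:ℂ) * Complex.I)) * x)) := by
      intro x
      push_cast
      rw [show (-(B:ℂ)) * x = -((B:ℂ) * x) by ring,
        show ((C:ℂ) * Complex.I) * x = ((C:ℂ) * x) * Complex.I by ring,
        show (-((C:ℂ) * Complex.I)) * x = -((C:ℂ) * x) * Complex.I by ring]
      rw [Complex.exp_add, Complex.exp_add, Complex.exp_add, Complex.exp_add]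
      have h1 := Complex.two_cosh ((B:ℂ) * x)
      have h2 := Complex.two_cos ((C:ℂ) * x)
      linear_combination (Complex.exp (-(a:ℂ) * x ^ 2) / 2) * h1
        - (Complex.exp (-(a:ℂ) * x ^ 2) / 2) * h2
    simp_rw [hsplit]
    have i1 := (gauss_integrable_aux a ha (B:ℂ)).const_mul (1/2 : ℂ)
    have i2 := (gauss_integrable_aux a ha (-(B:ℂ))).const_mul (1/2 : ℂ)
    have i3 := (gauss_integrable_aux a ha ((C:ℂ) * Complex.I)).const_mul (1/2 : ℂ)
    have i4 := (gauss_integrable_aux a ha (-((C:ℂ) * Complex.I))).const_mul (1/2 : ℂ)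
    have i12 : Integrable (fun x : ℝ => (1/2 : ℂ) * Complex.exp (-(a:ℂ) * x ^ 2 + (B:ℂ) * x)
        + (1/2 : ℂ) * Complex.exp (-(a:ℂ) * x ^ 2 + (-(B:ℂ)) * x)) volume := i1.add i2
    have i34 : Integrable (fun x : ℝ => (1/2 : ℂ) * Complex.exp (-(a:ℂ) * x ^ 2 + ((C:ℂ) * Complex.I) * x)
        + (1/2 : ℂ) * Complex.exp (-(a:ℂ) * x ^ 2 + (-((C:ℂ) * Complex.I)) * x)) volume := i3.add i4
    rw [integral_sub i12 i34, integral_add i1 i2, integral_add i3 i4,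
      integral_const_mul, integral_const_mul, integral_const_mul, integral_const_mul,
      gauss_integral_aux a ha, gauss_integral_aux a ha, gauss_integral_aux a ha,
      gauss_integral_aux a ha]
    have e1 : ((B:ℂ)) ^ 2 / (4 * a) = ((B ^ 2 / (4 * a) : ℝ) : ℂ) := by push_cast; ring
    have e2 : (-(B:ℂ)) ^ 2 / (4 * a) = ((B ^ 2 / (4 * a) : ℝ) : ℂ) := by push_cast; ring
    have e3 : ((C:ℂ) * Complex.I) ^ 2 / (4 * a) = ((-(C ^ 2 / (4 * a)) : ℝ) : ℂ) := by
      rw [mul_pow, Complex.I_sq]; push_cast; ring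
    have e4 : (-((C:ℂ) * Complex.I)) ^ 2 / (4 * a) = ((-(C ^ 2 / (4 * a)) : ℝ) : ℂ) := by
      rw [neg_pow, mul_pow, Complex.I_sq]; push_cast; ring
    rw [e1, e2, e3, e4, ← Complex.ofReal_exp, ← Complex.ofReal_exp]
    push_cast
    ring
  have cast1 : ((∫ x : ℝ, (Real.cosh (B * x) - Real.cos (C * x)) * Real.exp (-a * x ^ 2) : ℝ) : ℂ)
      = ∫ x : ℝ, (((Real.cosh (B * x) - Real.cos (C * x)) * Real.exp (-a * x ^ 2) : ℝ) : ℂ) :=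
    integral_ofReal.symm
  exact_mod_cast cast1.trans key

lemma shift_Ioi (A : ℝ) (G : ℝ → ℝ) :
    ∫ h in Set.Ioi A, G (h - A) = ∫ u in Set.Ioi (0:ℝ), G u := by
  rw [← integral_indicator measurableSet_Ioi, ← integral_indicator measurableSet_Ioi]
  have key : ∀ h : ℝ, (Set.Ioi A).indicator (fun h => G (h - A)) h
      = (Set.Ioi (0:ℝ)).indicator G (h - A) := by
    intro h
    by_cases hh : h ∈ Set.Ioi A
    · rw [Set.indicator_of_mem hh, Set.indicator_of_mem (by simp only [Set.mem_Ioi] at hh ⊢; linarith)]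
    · rw [Set.indicator_of_notMem hh, Set.indicator_of_notMem (by simp only [Set.mem_Ioi] at hh ⊢; linarith)]
  simp_rw [key]
  exact integral_sub_right_eq_self (fun u => (Set.Ioi (0:ℝ)).indicator G u) A

lemma even_half (B C a : ℝ) (hB : 0 ≤ B) (hC : 0 ≤ C) :
    ∫ x in Set.Ioi (0:ℝ), (Real.cosh (B * x) - Real.cos (C * x)) * Real.exp (-a * x ^ 2)
      = (∫ x : ℝ, (Real.cosh (B * x) - Real.cos (C * x)) * Real.exp (-a * x ^ 2)) / 2 := by
  rw [eq_div_iff (two_ne_zero (α := ℝ)), mul_comm,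
    ← integral_comp_abs (f := fun x => (Real.cosh (B * x) - Real.cos (C * x)) * Real.exp (-a * x ^ 2))]
  refine integral_congr_ae (Filter.Eventually.of_forall fun x => ?_)
  simp only
  rw [show B * |x| = |B * x| by rw [abs_mul, _root_.abs_of_nonneg hB],
    show C * |x| = |C * x| by rw [abs_mul, _root_.abs_of_nonneg hC],
    Real.cosh_abs, Real.cos_abs, _root_.sq_abs]

/-- **Decomposition of the reduced vacuum character into reduced boundary characters
(`1 < c < 25`, Liouville parameter a pure phase `b = e^{iθ}`).**
With `A = cos²θ` for `θ ∈ (0, π/2)` (so `c = 1 + 24cos²θ ∈ (1, 25)`, `A = (c−1)/24`),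
for every `t > 0`
`χ̂_vac(t) = ∫_A^∞ [√2·(cosh(4π·cosθ·√(h−A)) − cos(4π·sinθ·√(h−A)))/√(h−A)] · χ̂_h(1/t) dh`,
and the density is strictly positive for every `h > A`. -/
theorem vacuum_character_crossing_decomposition_phase_b (θ : ℝ)
    (hθ : θ ∈ Set.Ioo 0 (π / 2)) (A : ℝ) (hA : A = Real.cos θ ^ 2) :
    (∀ t : ℝ, 0 < t →
      t ^ ((1 : ℝ) / 4) * Real.exp (2 * π * t * A) * (1 - Real.exp (-(2 * π * t)))
        = ∫ h in Set.Ioi A,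
            (Real.sqrt 2 *
                (Real.cosh (4 * π * Real.cos θ * Real.sqrt (h - A)) -
                  Real.cos (4 * π * Real.sin θ * Real.sqrt (h - A))) / Real.sqrt (h - A)) *
              (t ^ (-(1 : ℝ) / 4) * Real.exp (-(2 * π / t) * (h - A)))) ∧
    (∀ h : ℝ, A < h →
      0 < Real.sqrt 2 *
            (Real.cosh (4 * π * Real.cos θ * Real.sqrt (h - A)) -
              Real.cos (4 * π * Real.sin θ * Real.sqrt (h - A))) / Real.sqrt (h - A)) := by
  obtain ⟨hθ0, hθ1⟩ := hθ
  have hπ := Real.pi_pos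
  have hcos : 0 < Real.cos θ := Real.cos_pos_of_mem_Ioo ⟨by linarith, hθ1⟩
  have hsin : 0 < Real.sin θ := Real.sin_pos_of_pos_of_lt_pi hθ0 (by linarith)
  constructor
  · intro t ht
    set B := 4 * π * Real.cos θ with hB
    set C := 4 * π * Real.sin θ with hC
    have hBpos : 0 < B := by positivity
    have hCpos : 0 < C := by positivity
    have ha : 0 < 2 * π / t := by positivity
    set G : ℝ → ℝ := fun u =>
      Real.sqrt 2 * (Real.cosh (B * Real.sqrt u) - Real.cos (C * Real.sqrt u)) / Real.sqrt u *
        (t ^ (-(1:ℝ)/4) * Real.exp (-(2 * π / t) * u)) with hG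
    have hRHS : (∫ h in Set.Ioi A,
        (Real.sqrt 2 * (Real.cosh (B * Real.sqrt (h - A)) - Real.cos (C * Real.sqrt (h - A))) /
            Real.sqrt (h - A)) * (t ^ (-(1:ℝ)/4) * Real.exp (-(2 * π / t) * (h - A))))
          = ∫ u in Set.Ioi (0:ℝ), G u := shift_Ioi A G
    have hsub : (∫ u in Set.Ioi (0:ℝ), G u)
        = ∫ x in Set.Ioi (0:ℝ), (2 * x ^ ((2:ℝ) - 1)) • G (x ^ (2:ℝ)) :=
      (integral_comp_rpow_Ioi_of_pos (g := G) (p := 2) two_pos).symm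
    have hcongr : (∫ x in Set.Ioi (0:ℝ), (2 * x ^ ((2:ℝ) - 1)) • G (x ^ (2:ℝ)))
        = ∫ x in Set.Ioi (0:ℝ), (2 * Real.sqrt 2 * t ^ (-(1:ℝ)/4)) *
            ((Real.cosh (B * x) - Real.cos (C * x)) * Real.exp (-(2 * π / t) * x ^ 2)) := by
      refine setIntegral_congr_fun measurableSet_Ioi (fun x hx => ?_)
      have hx0 : (0:ℝ) < x := hx
      have h1 : x ^ ((2:ℝ) - 1) = x := by norm_num
      have h2 : x ^ (2:ℝ) = x ^ 2 := by
        rw [show (2:ℝ) = ((2:ℕ):ℝ) by norm_num, Real.rpow_natCast]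
      rw [smul_eq_mul, h1, h2, hG]
      simp only
      rw [Real.sqrt_sq hx0.le]
      field_simp
    rw [hRHS, hsub, hcongr, integral_const_mul, even_half B C (2 * π / t) hBpos.le hCpos.le,
      gauss_cosh_cos (2 * π / t) B C ha]
    have e1 : π / (2 * π / t) = t / 2 := by field_simp
    have e2 : B ^ 2 / (4 * (2 * π / t)) = 2 * π * t * Real.cos θ ^ 2 := by
      rw [hB]; field_simp; ring
    have e3 : C ^ 2 / (4 * (2 * π / t)) = 2 * π * t * Real.sin θ ^ 2 := by
      rw [hC]; field_simp; ring
    rw [e1, e2, e3, hA]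
    have k1 : t ^ (-(1:ℝ)/4) * (Real.sqrt 2 * Real.sqrt (t / 2)) = t ^ ((1:ℝ)/4) := by
      rw [← Real.sqrt_mul (by norm_num : (0:ℝ) ≤ 2), show 2 * (t / 2) = t by ring,
        Real.sqrt_eq_rpow, ← Real.rpow_add ht]
      norm_num
    have k2 : Real.exp (2 * π * t * Real.cos θ ^ 2) * Real.exp (-(2 * π * t))
        = Real.exp (-(2 * π * t * Real.sin θ ^ 2)) := by
      rw [← Real.exp_add]
      congr 1
      linear_combination (2 * π * t) * Real.sin_sq_add_cos_sq θ
    linear_combination (Real.exp (-(2 * π * t * Real.sin θ ^ 2))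
        - Real.exp (2 * π * t * Real.cos θ ^ 2)) * k1 - t ^ ((1:ℝ)/4) * k2
  · intro h hh
    have hs : 0 < Real.sqrt (h - A) := Real.sqrt_pos.2 (by linarith)
    have h1 : 1 < Real.cosh (4 * π * Real.cos θ * Real.sqrt (h - A)) :=
      Real.one_lt_cosh.2 (by positivity)
    have h2 : Real.cos (4 * π * Real.sin θ * Real.sqrt (h - A)) ≤ 1 := Real.cos_le_one _
    have h3 : 0 < Real.cosh (4 * π * Real.cos θ * Real.sqrt (h - A)) -
        Real.cos (4 * π * Real.sin θ * Real.sqrt (h - A)) := by linarith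
    exact div_pos (mul_pos (Real.sqrt_pos.2 (by norm_num)) h3) hs
end

section
/- Let c > 1, A = (c−1)/24, and let h ≥ A be real. Then for every t > 0 the cross-channel reduced character of weight h decomposes into reduced bulk characters: t^{−1/4}·e^{−(2π/t)(h−A)} = ∫_{2A}^∞ [cos(4π·√((h−A)·(Δ/2 − A))) / √(Δ − 2A)] · t^{1/4}·e^{−2πt(Δ/2 − A)} dΔ. (In character notation: χ̂_h(t⁻¹) = ∫_{(c−1)/12}^∞ dΔ · cos(4π√((h−(c−1)/24)(Δ/2−(c−1)/24)))/√(Δ−(c−1)/12) · χ̂_{Δ/2}(t).) -/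
open Real MeasureTheory Set

lemma gauss_cos_real (s b : ℝ) (hs : 0 < s) :
    ∫ x : ℝ, Real.exp (-(s * x ^ 2)) * Real.cos (b * x)
      = Real.sqrt (π / s) * Real.exp (-(b ^ 2) / (4 * s)) := by
  have hs' : 0 < (s : ℂ).re := by simpa using hs
  have key := fourierIntegral_gaussian hs' (b : ℂ)
  have hint : Integrable fun x : ℝ ↦
      Complex.exp (Complex.I * (b : ℂ) * (x : ℂ)) * Complex.exp (-(s : ℂ) * (x : ℂ) ^ 2) := by
    refine (integrable_cexp_quadratic hs' (Complex.I * (b : ℂ)) 0).congr ?_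
    filter_upwards with x
    rw [← Complex.exp_add]
    congr 1
    ring
  have hre : ∀ x : ℝ,
      (Complex.exp (Complex.I * (b : ℂ) * (x : ℂ)) * Complex.exp (-(s : ℂ) * (x : ℂ) ^ 2)).re
        = Real.exp (-(s * x ^ 2)) * Real.cos (b * x) := by
    intro x
    rw [← Complex.exp_add, Complex.exp_re]
    have h1 : (Complex.I * (b : ℂ) * (x : ℂ) + -(s : ℂ) * (x : ℂ) ^ 2).re = -(s * x ^ 2) := by
      simp [← Complex.ofReal_pow]
    have h2 : (Complex.I * (b : ℂ) * (x : ℂ) + -(s : ℂ) * (x : ℂ) ^ 2).im = b * x := by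
      simp [← Complex.ofReal_pow]
    rw [h1, h2]
  have hLHS : (∫ x : ℝ, Complex.exp (Complex.I * (b : ℂ) * (x : ℂ)) *
      Complex.exp (-(s : ℂ) * (x : ℂ) ^ 2)).re
        = ∫ x : ℝ, Real.exp (-(s * x ^ 2)) * Real.cos (b * x) := by
    have h0 : (∫ x : ℝ, Complex.exp (Complex.I * (b : ℂ) * (x : ℂ)) *
        Complex.exp (-(s : ℂ) * (x : ℂ) ^ 2)).re
          = ∫ x : ℝ, (Complex.exp (Complex.I * (b : ℂ) * (x : ℂ)) *
            Complex.exp (-(s : ℂ) * (x : ℂ) ^ 2)).re :=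
      (Complex.reCLM.integral_comp_comm hint).symm
    rw [h0]
    exact integral_congr_ae (Filter.Eventually.of_forall hre)
  have hRHS : ((↑π / (s : ℂ)) ^ (1 / 2 : ℂ) * Complex.exp (-(b : ℂ) ^ 2 / (4 * (s : ℂ)))).re
      = Real.sqrt (π / s) * Real.exp (-(b ^ 2) / (4 * s)) := by
    have hd : ((π / s : ℝ) : ℂ) = ↑π / (s : ℂ) := by push_cast; ring
    have h1 : (↑π / (s : ℂ)) ^ (1 / 2 : ℂ) = ((((π / s) ^ ((1 : ℝ) / 2) : ℝ)) : ℂ) := by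
      rw [← hd, show (1 / 2 : ℂ) = ((1 / 2 : ℝ) : ℂ) by norm_num,
        ← Complex.ofReal_cpow (by positivity)]
    have h2 : Complex.exp (-(b : ℂ) ^ 2 / (4 * (s : ℂ)))
        = ((Real.exp (-(b ^ 2) / (4 * s)) : ℝ) : ℂ) := by
      rw [Complex.ofReal_exp]
      congr 1
      push_cast
      ring
    rw [h1, h2, ← Complex.ofReal_mul, Complex.ofReal_re, Real.sqrt_eq_rpow]
  rw [← hLHS, key, hRHS]

lemma gauss_cos_Ioi (s b : ℝ) (hs : 0 < s) :
    ∫ x in Ioi (0 : ℝ), Real.exp (-(s * x ^ 2)) * Real.cos (b * x)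
      = Real.sqrt (π / s) * Real.exp (-(b ^ 2) / (4 * s)) / 2 := by
  have heven : ∀ x : ℝ, Real.exp (-(s * |x| ^ 2)) * Real.cos (b * |x|)
      = Real.exp (-(s * x ^ 2)) * Real.cos (b * x) := by
    intro x
    rcases abs_choice x with h | h <;> rw [h]
    rw [neg_sq, mul_neg, Real.cos_neg]
  have h := integral_comp_abs (f := fun y ↦ Real.exp (-(s * y ^ 2)) * Real.cos (b * y))
  simp only [heven] at h
  rw [gauss_cos_real s b hs] at h
  linarith

/-- **Decomposition of a cross-channel reduced character into reduced bulk characters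
(`h ≥ (c−1)/24`).**
For `c > 1`, `A = (c−1)/24`, `h ≥ A` and `t > 0`:
`χ̂_h(1/t) = ∫_{2A}^∞ [cos(4π√((h−A)(Δ/2−A)))/√(Δ−2A)] · χ̂_{Δ/2}(t) dΔ`. -/
theorem crossed_character_bulk_decomposition (c A : ℝ) (hc : 1 < c)
    (hA : A = (c - 1) / 24) (h : ℝ) (hh : A ≤ h) (t : ℝ) (ht : 0 < t) :
    t ^ (-(1 : ℝ) / 4) * Real.exp (-(2 * π / t) * (h - A))
      = ∫ Δ in Set.Ioi (2 * A),
          (Real.cos (4 * π * Real.sqrt ((h - A) * (Δ / 2 - A))) / Real.sqrt (Δ - 2 * A)) *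
            (t ^ ((1 : ℝ) / 4) * Real.exp (-(2 * π * t * (Δ / 2 - A)))) := by
  set a := h - A with ha_def
  have ha0 : 0 ≤ a := by linarith
  have hs2 : Real.sqrt 2 ≠ 0 := by positivity
  have hs2sq : Real.sqrt 2 * Real.sqrt 2 = 2 := Real.mul_self_sqrt (by norm_num)
  -- the substitution Δ = 2A + 2x²
  have himg : (fun x : ℝ ↦ 2 * A + 2 * x ^ 2) '' Ioi 0 = Ioi (2 * A) := by
    ext y
    simp only [mem_image, mem_Ioi]
    constructor
    · rintro ⟨x, hx, rfl⟩; nlinarith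
    · intro hy
      refine ⟨Real.sqrt ((y - 2 * A) / 2), Real.sqrt_pos.mpr (by linarith), ?_⟩
      rw [Real.sq_sqrt (by linarith)]
      ring
  have hderiv : ∀ x ∈ Ioi (0 : ℝ),
      HasDerivWithinAt (fun x : ℝ ↦ 2 * A + 2 * x ^ 2) (4 * x) (Ioi 0) x := by
    intro x _
    have h2 : HasDerivAt (fun x : ℝ ↦ 2 * A + 2 * x ^ 2) (4 * x) x := by
      have := ((hasDerivAt_pow 2 x).const_mul (2 : ℝ)).const_add (2 * A)
      refine this.congr_deriv ?_
      norm_num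
      ring
    exact h2.hasDerivWithinAt
  have hinj : InjOn (fun x : ℝ ↦ 2 * A + 2 * x ^ 2) (Ioi 0) := by
    intro x hx y hy hxy
    simp only [mem_Ioi] at hx hy
    simp only at hxy
    nlinarith
  rw [← himg, integral_image_eq_integral_abs_deriv_smul measurableSet_Ioi hderiv hinj]
  have hsimp : EqOn
      (fun x : ℝ ↦ |4 * x| • ((Real.cos (4 * π * Real.sqrt (a * ((2 * A + 2 * x ^ 2) / 2 - A))) /
          Real.sqrt (2 * A + 2 * x ^ 2 - 2 * A)) *
            (t ^ ((1 : ℝ) / 4) * Real.exp (-(2 * π * t * ((2 * A + 2 * x ^ 2) / 2 - A))))))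
      (fun x : ℝ ↦ (2 * Real.sqrt 2 * t ^ ((1 : ℝ) / 4)) *
            (Real.exp (-(2 * π * t * x ^ 2)) * Real.cos (4 * π * Real.sqrt a * x)))
      (Ioi 0) := by
    intro x hx
    simp only [mem_Ioi] at hx
    simp only
    have e1 : (2 * A + 2 * x ^ 2) / 2 - A = x ^ 2 := by ring
    have e2 : 2 * A + 2 * x ^ 2 - 2 * A = 2 * x ^ 2 := by ring
    rw [e1, e2]
    have e3 : Real.sqrt (a * x ^ 2) = Real.sqrt a * x := by
      rw [Real.sqrt_mul ha0, Real.sqrt_sq hx.le]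
    have e4 : Real.sqrt (2 * x ^ 2) = Real.sqrt 2 * x := by
      rw [Real.sqrt_mul (by norm_num : (0:ℝ) ≤ 2), Real.sqrt_sq hx.le]
    rw [e3, e4, abs_of_pos (by positivity), smul_eq_mul,
      show 4 * π * (Real.sqrt a * x) = 4 * π * Real.sqrt a * x from by ring]
    have hx0 : x ≠ 0 := hx.ne'
    generalize Real.cos (4 * π * Real.sqrt a * x) = C
    generalize t ^ ((1 : ℝ) / 4) = T
    generalize Real.exp (-(2 * π * t * x ^ 2)) = E
    field_simp
    linear_combination (-2 * C * T * E) * hs2sq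
  rw [setIntegral_congr_fun measurableSet_Ioi hsimp, integral_const_mul,
    gauss_cos_Ioi (2 * π * t) (4 * π * Real.sqrt a) (by positivity)]
  have hE : Real.exp (-((4 * π * Real.sqrt a) ^ 2) / (4 * (2 * π * t)))
      = Real.exp (-(2 * π / t) * a) := by
    congr 1
    have hsa : Real.sqrt a ^ 2 = a := Real.sq_sqrt ha0
    rw [mul_pow, mul_pow, hsa]
    field_simp
    ring
  have hP : 2 * Real.sqrt 2 * t ^ ((1 : ℝ) / 4) * (Real.sqrt (π / (2 * π * t)) / 2)
      = t ^ (-(1 : ℝ) / 4) := by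
    have h1 : π / (2 * π * t) = (2 * t)⁻¹ := by
      rw [inv_eq_one_div, div_eq_div_iff (by positivity) (by positivity)]
      ring
    rw [h1, Real.sqrt_inv, Real.sqrt_mul (by norm_num : (0:ℝ) ≤ 2), mul_inv,
      Real.sqrt_eq_rpow t]
    have h2 : t ^ ((1 : ℝ) / 4) * (t ^ ((1 : ℝ) / 2))⁻¹ = t ^ (-(1 : ℝ) / 4) := by
      rw [← Real.rpow_neg ht.le, ← Real.rpow_add ht]
      norm_num
    calc 2 * Real.sqrt 2 * t ^ ((1 : ℝ) / 4) * ((Real.sqrt 2)⁻¹ * (t ^ ((1:ℝ)/2))⁻¹ / 2)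
        = (Real.sqrt 2 * (Real.sqrt 2)⁻¹) * (t ^ ((1 : ℝ) / 4) * (t ^ ((1:ℝ)/2))⁻¹) := by ring
      _ = t ^ (-(1 : ℝ) / 4) := by rw [mul_inv_cancel₀ hs2, one_mul, h2]
  calc t ^ (-(1 : ℝ) / 4) * Real.exp (-(2 * π / t) * a)
      = (2 * Real.sqrt 2 * t ^ ((1 : ℝ) / 4) * (Real.sqrt (π / (2 * π * t)) / 2)) *
          Real.exp (-(2 * π / t) * a) := by rw [hP]
    _ = 2 * Real.sqrt 2 * t ^ ((1 : ℝ) / 4) *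
          (Real.sqrt (π / (2 * π * t)) *
            Real.exp (-((4 * π * Real.sqrt a) ^ 2) / (4 * (2 * π * t))) / 2) := by
        rw [hE]; ring
end

section
/- Let c > 1, A = (c−1)/24, and let h ≤ A be real. Then for every t > 0 one has t^{−1/4}·e^{(2π/t)(A−h)} = ∫_{2A}^∞ [cosh(4π·√((A−h)·(Δ/2 − A))) / √(Δ − 2A)] · t^{1/4}·e^{−2πt(Δ/2 − A)} dΔ, and the density cosh(4π·√((A−h)·(Δ/2 − A)))/√(Δ − 2A) is strictly positive for all Δ > 2A. (Positivity of this density for h < (c−1)/24 is the reason that no linear-programming functional can certify an upper bound on the boundary entropy when the boundary gap is below (c−1)/24.) -/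
open Real MeasureTheory

section aux

open Set

private lemma gauss_lin' (s b : ℝ) (hs : 0 < s) :
    ∫ x : ℝ, Real.exp (-s * x ^ 2 + b * x) = Real.sqrt (π / s) * Real.exp (b ^ 2 / (4 * s)) := by
  have hsC : ((-s : ℂ)).re < 0 := by simpa using hs
  have H := integral_cexp_quadratic hsC (b : ℂ) 0
  have hi (x : ℝ) : Complex.exp ((-s : ℂ) * (x:ℂ) ^ 2 + (b:ℂ) * x + 0)
      = ((Real.exp (-s * x ^ 2 + b * x) : ℝ) : ℂ) := by
    rw [Complex.ofReal_exp]; push_cast; ring_nf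
  simp_rw [hi] at H
  have key : ∫ x : ℝ, ((Real.exp (-s*x^2+b*x) : ℝ) : ℂ)
      = ((∫ x : ℝ, Real.exp (-s*x^2+b*x) : ℝ) : ℂ) := by
    exact integral_ofReal (𝕜 := ℂ)
  rw [key] at H
  have hR : ((π : ℂ) / -(-s : ℂ)) ^ (1 / 2 : ℂ) * Complex.exp (0 - (b:ℂ)^2 / (4 * (-s:ℂ)))
      = ((Real.sqrt (π / s) * Real.exp (b ^ 2 / (4 * s)) : ℝ) : ℂ) := by
    rw [neg_neg]
    have h1 : ((π : ℂ) / (s : ℂ)) ^ (1 / 2 : ℂ) = ((Real.sqrt (π / s) : ℝ) : ℂ) := by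
      rw [Real.sqrt_eq_rpow, ← Complex.ofReal_div,
        show ((1:ℂ)/2) = ((1/2 : ℝ) : ℂ) by norm_num,
        ← Complex.ofReal_cpow (by positivity)]
    rw [h1]
    have h2 : (0 - (b:ℂ)^2 / (4 * (-s:ℂ))) = ((b ^ 2 / (4 * s) : ℝ) : ℂ) := by
      push_cast; field_simp; ring
    rw [h2, ← Complex.ofReal_exp, ← Complex.ofReal_mul]
  rw [hR] at H
  exact_mod_cast H

private lemma gauss_lin_integrable' (s b : ℝ) (hs : 0 < s) :
    Integrable (fun x : ℝ => Real.exp (-s * x ^ 2 + b * x)) := by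
  have h := (integrable_cexp_quadratic (b := (s:ℂ)) (by simpa using hs) (b:ℂ) 0).re
  refine h.congr (Filter.Eventually.of_forall fun x => ?_)
  have hx : Complex.exp (-(s:ℂ) * (x:ℂ) ^ 2 + (b:ℂ) * x + 0)
      = ((Real.exp (-s * x ^ 2 + b * x) : ℝ) : ℂ) := by
    rw [Complex.ofReal_exp]; push_cast; ring_nf
  simp only [RCLike.re_to_complex]
  rw [hx, Complex.ofReal_re]

private lemma shift_Ioi' (g : ℝ → ℝ) (a d : ℝ) :
    ∫ x in Ioi a, g (x + d) = ∫ x in Ioi (a + d), g x := by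
  rw [← integral_indicator measurableSet_Ioi, ← integral_indicator measurableSet_Ioi,
    ← integral_add_right_eq_self (Set.indicator (Ioi (a + d)) g) d]
  congr 1; ext x
  simp [Set.indicator_apply, Set.mem_Ioi]

private lemma cosh_gauss' (s b : ℝ) (hs : 0 < s) :
    ∫ x : ℝ, Real.cosh (b * x) * Real.exp (-s * x ^ 2)
      = Real.sqrt (π / s) * Real.exp (b ^ 2 / (4 * s)) := by
  have i1 := gauss_lin_integrable' s b hs
  have i2 := gauss_lin_integrable' s (-b) hs
  have e : ∀ x : ℝ, Real.cosh (b * x) * Real.exp (-s * x ^ 2)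
      = (Real.exp (-s * x ^ 2 + b * x) + Real.exp (-s * x ^ 2 + -b * x)) / 2 := by
    intro x
    rw [Real.cosh_eq, Real.exp_add, Real.exp_add]
    ring_nf
  simp_rw [e]
  rw [integral_div, integral_add i1 i2, gauss_lin' s b hs, gauss_lin' s (-b) hs]
  rw [neg_pow]
  ring

private lemma key_int' (s a : ℝ) (hs : 0 < s) (ha : 0 ≤ a) :
    ∫ x in Ioi (0:ℝ),
        Real.cosh (2 * Real.sqrt a * Real.sqrt x) / Real.sqrt x * Real.exp (-s * x)
      = Real.sqrt (π / s) * Real.exp (a / s) := by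
  set g : ℝ → ℝ :=
    fun x => Real.cosh (2 * Real.sqrt a * Real.sqrt x) / Real.sqrt x * Real.exp (-s * x) with hg
  set f : ℝ → ℝ := fun u => Real.cosh (2 * Real.sqrt a * u) * Real.exp (-s * u ^ 2) with hf
  have sub := integral_comp_rpow_Ioi_of_pos (g := g) (p := 2) two_pos
  have step1 : ∫ u in Ioi (0:ℝ), (2 * u ^ ((2:ℝ) - 1)) • g (u ^ (2:ℝ))
      = ∫ u in Ioi (0:ℝ), 2 * f u := by
    refine setIntegral_congr_fun measurableSet_Ioi fun u hu => ?_
    have hu0 : 0 < u := hu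
    have h1 : u ^ ((2:ℝ) - 1) = u := by norm_num
    have h2 : u ^ (2:ℝ) = u ^ 2 := by
      rw [show (2:ℝ) = ((2:ℕ):ℝ) by norm_num, Real.rpow_natCast]
    have h3 : Real.sqrt (u ^ 2) = u := Real.sqrt_sq hu0.le
    simp only [smul_eq_mul, hg, hf, h1, h2, h3]
    field_simp
  have step2 : ∫ u in Ioi (0:ℝ), 2 * f u = ∫ x : ℝ, f x := by
    rw [MeasureTheory.integral_const_mul]
    rw [show (∫ x : ℝ, f x) = ∫ x : ℝ, f |x| from
      (integral_congr_ae (Filter.Eventually.of_forall fun x => by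
        simp only [hf]
        rw [show 2 * Real.sqrt a * |x| = |2 * Real.sqrt a * x| by
              rw [abs_mul, abs_of_nonneg (by positivity : (0:ℝ) ≤ 2 * Real.sqrt a)],
          Real.cosh_abs, sq_abs])).symm]
    rw [integral_comp_abs (f := f)]
  have step3 : ∫ x : ℝ, f x = Real.sqrt (π / s) * Real.exp (a / s) := by
    rw [hf]
    rw [cosh_gauss' s (2 * Real.sqrt a) hs]
    congr 1
    rw [mul_pow, Real.sq_sqrt ha]
    ring_nf
  rw [← sub, step1, step2, step3]

end aux

/-- **Decomposition of a cross-channel reduced character into reduced bulk characters with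
positive density (`h ≤ (c−1)/24`).**
For `c > 1`, `A = (c−1)/24`, `h ≤ A` and `t > 0`:
`t^{−1/4}·e^{(2π/t)(A−h)} = ∫_{2A}^∞ [cosh(4π√((A−h)(Δ/2−A)))/√(Δ−2A)] · χ̂_{Δ/2}(t) dΔ`,
and the density `cosh(4π√((A−h)(Δ/2−A)))/√(Δ−2A)` is strictly positive for all `Δ > 2A`. -/
theorem crossed_character_bulk_decomposition_cosh (c A : ℝ) (hc : 1 < c)
    (hA : A = (c - 1) / 24) (h : ℝ) (hh : h ≤ A) :
    (∀ t : ℝ, 0 < t →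
      t ^ (-(1 : ℝ) / 4) * Real.exp ((2 * π / t) * (A - h))
        = ∫ Δ in Set.Ioi (2 * A),
            (Real.cosh (4 * π * Real.sqrt ((A - h) * (Δ / 2 - A))) / Real.sqrt (Δ - 2 * A)) *
              (t ^ ((1 : ℝ) / 4) * Real.exp (-(2 * π * t * (Δ / 2 - A))))) ∧
    (∀ Δ : ℝ, 2 * A < Δ →
      0 < Real.cosh (4 * π * Real.sqrt ((A - h) * (Δ / 2 - A))) / Real.sqrt (Δ - 2 * A)) := by
  have hb : 0 ≤ A - h := by linarith
  constructor
  · intro t ht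
    set b := A - h with hbdef
    set a : ℝ := 2 * π ^ 2 * b with hadef
    have ha : 0 ≤ a := by positivity
    set s : ℝ := π * t with hsdef
    have hs : 0 < s := by positivity
    set F : ℝ → ℝ := fun Δ =>
      Real.cosh (4 * π * Real.sqrt (b * (Δ / 2 - A))) / Real.sqrt (Δ - 2 * A) *
        (t ^ ((1 : ℝ) / 4) * Real.exp (-(2 * π * t * (Δ / 2 - A)))) with hF
    have hshift : (∫ Δ in Set.Ioi (2 * A), F Δ) = ∫ x in Set.Ioi (0:ℝ), F (x + 2 * A) := by
      rw [shift_Ioi' F 0 (2 * A), zero_add]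
    have hcong : (∫ x in Set.Ioi (0:ℝ), F (x + 2 * A))
        = ∫ x in Set.Ioi (0:ℝ),
            t ^ ((1 : ℝ) / 4) *
              (Real.cosh (2 * Real.sqrt a * Real.sqrt x) / Real.sqrt x * Real.exp (-s * x)) := by
      refine setIntegral_congr_fun measurableSet_Ioi fun x hx => ?_
      have hx0 : 0 < x := hx
      have e1 : (x + 2 * A) / 2 - A = x / 2 := by ring
      have e2 : x + 2 * A - 2 * A = x := by ring
      have e3 : 4 * π * Real.sqrt (b * (x / 2)) = 2 * Real.sqrt a * Real.sqrt x := by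
        have l1 : Real.sqrt (8 * π ^ 2 * b * x) = 4 * π * Real.sqrt (b * (x / 2)) := by
          rw [show 8 * π ^ 2 * b * x = (4 * π) ^ 2 * (b * (x / 2)) by ring,
            Real.sqrt_mul (by positivity), Real.sqrt_sq (by positivity)]
        have l2 : Real.sqrt (8 * π ^ 2 * b * x) = 2 * Real.sqrt a * Real.sqrt x := by
          rw [show 8 * π ^ 2 * b * x = (2:ℝ) ^ 2 * (a * x) by rw [hadef]; ring,
            Real.sqrt_mul (by positivity), Real.sqrt_sq (by norm_num : (0:ℝ) ≤ 2),
            Real.sqrt_mul ha]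
          ring
        rw [← l1, l2]
      have e4 : -(2 * π * t * (x / 2)) = -s * x := by rw [hsdef]; ring
      simp only [hF, e1, e2, e3, e4]
      ring
    have hkey := key_int' s a hs ha
    have hfin : Real.sqrt (π / s) = t ^ (-(1:ℝ)/2) := by
      rw [hsdef, show π / (π * t) = t⁻¹ by field_simp,
        show t⁻¹ = t ^ (-1 : ℝ) from (Real.rpow_neg_one t).symm,
        Real.sqrt_eq_rpow, ← Real.rpow_mul ht.le]
      norm_num
    have has : a / s = 2 * π / t * b := by
      rw [hadef, hsdef]
      field_simp
    rw [hshift, hcong, MeasureTheory.integral_const_mul, hkey, hfin, has]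
    rw [← mul_assoc, ← Real.rpow_add ht]
    norm_num
  · intro Δ hΔ
    exact div_pos (Real.cosh_pos _) (Real.sqrt_pos.mpr (by linarith))
end

section
/- Let c > 1, A = (c−1)/24, and let h* be a real number with 0 ≤ h* ≤ A. Let N ∈ ℕ and ω_0, ..., ω_N ∈ ℝ, and define the derivative functional ω[f] = Σ_{m=0}^N ω_m · (d/dz)^m [f(e^z)] evaluated at z = 0. If ω[t ↦ χ̂_h(1/t)] ≤ 0 for every h ≥ h*, then ω[χ̂_vac] ≤ 0. In particular, no derivative functional of finite order can simultaneously satisfy the positivity condition ω[t ↦ χ̂_h(1/t)] ≤ 0 for all h ≥ h* and the normalization ω[χ̂_vac] = 1 when h* ≤ (c−1)/24; hence no upper bound on the boundary entropy can be derived by this method unless the boundary gap exceeds (c−1)/24. -/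
/-!
Put `t = e^z`. The vacuum character is a positive superposition of dual-channel characters,
`χ̂_vac(e^z) = ∫ ρ(u) χ̂_{A + u²/2π}(e^{-z}) du` with
`ρ(u) = (cosh (√(8πA) u) - cosh (√(8π(A-1)) u)) / √π ≥ 0`,
as the Gaussian transform `∫ e^{-βu²} cosh (√s u) du = √(π/β) e^{s/4β}` shows. The `z`-derivatives
of the integrand are polynomials times a Gaussian in `u`, uniformly for `|z| < 1`, so `ω` may be
taken under the integral: `ω[χ̂_vac] = ∫ ρ(u) ω[χ̂_{A + u²/2π}(1/·)] du ≤ 0`, because every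
`A + u²/2π ≥ A ≥ h*`.
-/

open Real

/-- Reduced Virasoro character `χ̂_h(t) = t^{1/4} · exp(−2πt(h−A))`. -/
noncomputable def chiHat (A h t : ℝ) : ℝ :=
  t ^ ((1 : ℝ) / 4) * Real.exp (-(2 * Real.pi * t * (h - A)))

/-- Reduced vacuum character `χ̂_vac(t) = t^{1/4} · exp(2πtA) · (1 − exp(−2πt))`. -/
noncomputable def chiVac (A t : ℝ) : ℝ :=
  t ^ ((1 : ℝ) / 4) * Real.exp (2 * Real.pi * t * A) * (1 - Real.exp (-(2 * Real.pi * t)))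

/-- The derivative functional of order `N` with coefficients `w 0, …, w N`,
`ω[f] = Σ_{m=0}^N w_m · (d/dz)^m [f(e^z)] |_{z=0}`. -/
noncomputable def derivFunctional (N : ℕ) (w : ℕ → ℝ) (f : ℝ → ℝ) : ℝ :=
  ∑ m ∈ Finset.range (N + 1), w m * iteratedDeriv m (fun z : ℝ => f (Real.exp z)) 0

open MeasureTheory Filter Polynomial
open scoped ContDiff

section

variable {𝕜 α E : Type*} [RCLike 𝕜] [MeasurableSpace α] {μ : Measure α}
  [NormedAddCommGroup E] [NormedSpace ℝ E] [NormedSpace 𝕜 E]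

theorem iteratedDeriv_integral_of_dominated {G : 𝕜 → α → E} {s : Set 𝕜} (hs : IsOpen s)
    (hG : ∀ a, ContDiff 𝕜 ∞ (G · a))
    (hG_meas : ∀ m x, AEStronglyMeasurable (fun a => iteratedDeriv m (G · a) x) μ)
    (hG_bound : ∀ m, ∃ bound : α → ℝ, Integrable bound μ ∧
      ∀ x ∈ s, ∀ a, ‖iteratedDeriv m (G · a) x‖ ≤ bound a)
    (m : ℕ) {x₀ : 𝕜} (hx₀ : x₀ ∈ s) :
    iteratedDeriv m (fun x => ∫ a, G x a ∂μ) x₀ = ∫ a, iteratedDeriv m (G · a) x₀ ∂μ := by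
  induction m generalizing x₀ with
  | zero => simp
  | succ m ih =>
    obtain ⟨bound, hbound_int, hbound⟩ := hG_bound (m + 1)
    obtain ⟨bound₀, hbound₀_int, hbound₀⟩ := hG_bound m
    have hderiv (a : α) (x : 𝕜) :
        HasDerivAt (iteratedDeriv m (G · a)) (iteratedDeriv (m + 1) (G · a) x) x := by
      rw [iteratedDeriv_succ]
      exact ((hG a).differentiable_iteratedDeriv m (by exact_mod_cast WithTop.coe_lt_top _)
        x).hasDerivAt
    have hint_deriv := hasDerivAt_integral_of_dominated_loc_of_deriv_le (hs.mem_nhds hx₀)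
      (Eventually.of_forall fun x => hG_meas m x)
      (hbound₀_int.mono' (hG_meas m x₀) (ae_of_all _ (hbound₀ x₀ hx₀)))
      (hG_meas (m + 1) x₀) (ae_of_all _ fun a x hx => hbound x hx a) hbound_int
      (ae_of_all _ fun a x _ => hderiv a x)
    rw [iteratedDeriv_succ, ← hint_deriv.2.deriv]
    exact EventuallyEq.deriv_eq (eventually_of_mem (hs.mem_nhds hx₀) fun x hx => ih hx)

end

theorem Polynomial.exists_abs_eval_le_mul_exp_half (p : ℝ[X]) :
    ∃ C, 0 ≤ C ∧ ∀ y, 0 ≤ y → |p.eval y| ≤ C * exp (y / 2) := by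
  refine ⟨∑ i ∈ Finset.range (p.natDegree + 1), |p.coeff i| * (2 ^ i * i.factorial),
    by positivity, fun y hy => ?_⟩
  rw [eval_eq_sum_range, Finset.sum_mul]
  refine (Finset.abs_sum_le_sum_abs _ _).trans (Finset.sum_le_sum fun i _ => ?_)
  rw [abs_mul, abs_pow, abs_of_nonneg hy, mul_assoc]
  gcongr
  have h := pow_div_factorial_le_exp (x := y / 2) (by positivity) i
  rw [div_pow, div_div, div_le_iff₀ (by positivity)] at h
  linarith

theorem integrable_cexp_neg_mul_sq_mul_cosh {b : ℂ} (hb : 0 < b.re) (c : ℂ) :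
    Integrable fun x : ℝ => Complex.exp (-b * x ^ 2) * Complex.cosh (c * x) := by
  have h := ((integrable_cexp_quadratic hb c 0).add
    (integrable_cexp_quadratic hb (-c) 0)).div_const 2
  refine h.congr (ae_of_all _ fun x => ?_)
  simp only [Pi.add_apply, add_zero]
  rw [Complex.cosh, mul_div_assoc', mul_add, ← Complex.exp_add, ← Complex.exp_add, ← neg_mul]

theorem integral_cexp_neg_mul_sq_mul_cosh {b : ℂ} (hb : 0 < b.re) (c : ℂ) :
    ∫ x : ℝ, Complex.exp (-b * x ^ 2) * Complex.cosh (c * x) =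
      (π / b) ^ (1 / 2 : ℂ) * Complex.exp (c ^ 2 / (4 * b)) := by
  have hb' : (-b).re < 0 := by simpa using hb
  have h (x : ℝ) : Complex.exp (-b * x ^ 2) * Complex.cosh (c * x) =
      (Complex.exp (-b * x ^ 2 + c * x + 0) + Complex.exp (-b * x ^ 2 + (-c) * x + 0)) / 2 := by
    rw [add_zero, add_zero, Complex.cosh, mul_div_assoc', mul_add, ← Complex.exp_add,
      ← Complex.exp_add, ← neg_mul]
  simp_rw [h]
  rw [integral_div, integral_add (integrable_cexp_quadratic hb c 0)
    (integrable_cexp_quadratic hb (-c) 0), integral_cexp_quadratic hb', integral_cexp_quadratic hb',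
    neg_neg]
  field_simp
  ring_nf

/-- `cosh (√s * u)` for either complex square root of `s`, which is real since `cosh` is even. -/
noncomputable def evenCosh (s u : ℝ) : ℝ :=
  if 0 ≤ s then cosh (√s * u) else cos (√(-s) * u)

theorem exists_ofReal_evenCosh (s : ℝ) :
    ∃ c : ℂ, c ^ 2 = s ∧ ∀ u : ℝ, (evenCosh s u : ℂ) = Complex.cosh (c * u) := by
  by_cases hs : 0 ≤ s
  · refine ⟨√s, by rw [← Complex.ofReal_pow, sq_sqrt hs], fun u => ?_⟩
    simp [evenCosh, hs]
  · refine ⟨√(-s) * Complex.I, ?_, fun u => ?_⟩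
    · rw [mul_pow, Complex.I_sq, ← Complex.ofReal_pow, sq_sqrt (by linarith)]; push_cast; ring
    · rw [mul_right_comm, Complex.cosh_mul_I]
      simp [evenCosh, hs]

theorem integrable_exp_neg_mul_sq_mul_evenCosh {β : ℝ} (hβ : 0 < β) (s : ℝ) :
    Integrable fun u : ℝ => exp (-β * u ^ 2) * evenCosh s u := by
  obtain ⟨c, -, hc⟩ := exists_ofReal_evenCosh s
  have h := (integrable_cexp_neg_mul_sq_mul_cosh (b := β) (by simpa using hβ) c).re
  refine h.congr (ae_of_all _ fun u => ?_)
  simp only [← hc, ← Complex.ofReal_neg, ← Complex.ofReal_pow, ← Complex.ofReal_mul,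
    ← Complex.ofReal_exp, RCLike.re_to_complex, Complex.ofReal_re]

theorem integral_exp_neg_mul_sq_mul_evenCosh {β : ℝ} (hβ : 0 < β) (s : ℝ) :
    ∫ u : ℝ, exp (-β * u ^ 2) * evenCosh s u = √(π / β) * exp (s / (4 * β)) := by
  obtain ⟨c, hcs, hc⟩ := exists_ofReal_evenCosh s
  apply Complex.ofReal_injective
  rw [← integral_complex_ofReal]
  push_cast
  simp_rw [hc]
  rw [integral_cexp_neg_mul_sq_mul_cosh (by simpa using hβ), hcs, sqrt_eq_rpow,
    ← Complex.ofReal_div, Complex.ofReal_cpow (by positivity)]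
  norm_num

theorem continuous_evenCosh (s : ℝ) : Continuous (evenCosh s) := by
  unfold evenCosh; split_ifs <;> fun_prop

theorem evenCosh_le_evenCosh {s t : ℝ} (hst : s ≤ t) (ht : 0 ≤ t) (u : ℝ) :
    evenCosh s u ≤ evenCosh t u := by
  rw [evenCosh, evenCosh, if_pos ht]
  split_ifs with hs
  · rw [cosh_le_cosh, abs_mul, abs_mul, abs_of_nonneg (sqrt_nonneg s),
      abs_of_nonneg (sqrt_nonneg t)]
    gcongr
  · exact (cos_le_one _).trans (one_le_cosh _)

noncomputable def dualChar (a z : ℝ) : ℝ := exp (-(z / 4) - a * exp (-z))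

theorem chiHat_one_div_exp (A h z : ℝ) :
    chiHat A h (1 / exp z) = dualChar (2 * π * (h - A)) z := by
  rw [chiHat, dualChar, one_div, ← exp_neg, ← exp_mul, ← exp_add]
  ring_nf

theorem contDiff_dualChar (a : ℝ) : ContDiff ℝ ∞ (dualChar a) := by
  unfold dualChar; fun_prop

noncomputable def dualCharPoly : ℕ → ℝ[X]
  | 0 => 1
  | m + 1 => (X - C (1 / 4)) * dualCharPoly m - X * derivative (dualCharPoly m)

theorem hasDerivAt_eval_dualCharPoly_mul_dualChar (m : ℕ) (a z : ℝ) :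
    HasDerivAt (fun z => (dualCharPoly m).eval (a * exp (-z)) * dualChar a z)
      ((dualCharPoly (m + 1)).eval (a * exp (-z)) * dualChar a z) z := by
  have hy : HasDerivAt (fun z => a * exp (-z)) (-(a * exp (-z))) z := by
    simpa using ((hasDerivAt_neg z).exp).const_mul a
  have hg : HasDerivAt (dualChar a) (dualChar a z * (-(1 / 4) - -(a * exp (-z)))) z :=
    (((hasDerivAt_id' z).div_const 4).neg.sub hy).exp
  refine ((((dualCharPoly m).hasDerivAt _).comp z hy).mul hg).congr_deriv ?_
  simp only [dualCharPoly, eval_sub, eval_mul, eval_X, eval_C, Function.comp]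
  ring

theorem iteratedDeriv_dualChar (m : ℕ) (a z : ℝ) :
    iteratedDeriv m (dualChar a) z = (dualCharPoly m).eval (a * exp (-z)) * dualChar a z := by
  induction m generalizing z with
  | zero => simp [dualCharPoly]
  | succ m ih =>
    rw [iteratedDeriv_succ, funext ih]
    exact (hasDerivAt_eval_dualCharPoly_mul_dualChar m a z).deriv

theorem exists_abs_iteratedDeriv_dualChar_sq_le (m : ℕ) :
    ∃ C, ∀ x ∈ Set.Ioo (-1 : ℝ) 1, ∀ u : ℝ,
      |iteratedDeriv m (dualChar (u ^ 2)) x| ≤ C * exp (-(exp (-1) / 2) * u ^ 2) := by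
  obtain ⟨C, hC0, hC⟩ := (dualCharPoly m).exists_abs_eval_le_mul_exp_half
  refine ⟨C * exp (1 / 4), fun x hx u => ?_⟩
  have hy : exp (-1) * u ^ 2 ≤ u ^ 2 * exp (-x) := by
    rw [mul_comm]; gcongr; linarith [hx.2]
  rw [iteratedDeriv_dualChar, abs_mul, abs_of_pos (a := dualChar (u ^ 2) x) (exp_pos _)]
  calc |(dualCharPoly m).eval (u ^ 2 * exp (-x))| * dualChar (u ^ 2) x
      ≤ C * exp (u ^ 2 * exp (-x) / 2) * dualChar (u ^ 2) x :=
        mul_le_mul_of_nonneg_right (hC _ (by positivity)) (exp_pos _).le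
    _ = C * exp (-(x / 4) - u ^ 2 * exp (-x) / 2) := by
      rw [dualChar, mul_assoc, ← exp_add]; ring_nf
    _ ≤ C * exp (1 / 4 + -(exp (-1) / 2) * u ^ 2) := by
      gcongr; linarith [hx.1]
    _ = C * exp (1 / 4) * exp (-(exp (-1) / 2) * u ^ 2) := by rw [exp_add, mul_assoc]

noncomputable def vacDensity (A u : ℝ) : ℝ :=
  (evenCosh (8 * π * A) u - evenCosh (8 * π * (A - 1)) u) / √π

theorem vacDensity_nonneg {A : ℝ} (hA : 0 ≤ A) (u : ℝ) : 0 ≤ vacDensity A u :=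
  div_nonneg (sub_nonneg.2 (evenCosh_le_evenCosh (by linarith [pi_pos]) (by positivity) u))
    (sqrt_nonneg π)

theorem continuous_vacDensity (A : ℝ) : Continuous (vacDensity A) :=
  ((continuous_evenCosh _).sub (continuous_evenCosh _)).div_const _

theorem integrable_exp_neg_mul_sq_mul_vacDensity {β : ℝ} (hβ : 0 < β) (A : ℝ) :
    Integrable fun u : ℝ => exp (-β * u ^ 2) * vacDensity A u := by
  refine (((integrable_exp_neg_mul_sq_mul_evenCosh hβ (8 * π * A)).sub
    (integrable_exp_neg_mul_sq_mul_evenCosh hβ (8 * π * (A - 1)))).div_const √π).congr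
    (ae_of_all _ fun u => ?_)
  simp only [vacDensity, Pi.sub_apply]
  ring

theorem integral_exp_neg_mul_sq_mul_vacDensity {β : ℝ} (hβ : 0 < β) (A : ℝ) :
    ∫ u : ℝ, exp (-β * u ^ 2) * vacDensity A u =
      (exp (2 * π * A / β) - exp (2 * π * (A - 1) / β)) / √β := by
  simp_rw [vacDensity, mul_div_assoc', mul_sub]
  rw [integral_div, integral_sub (integrable_exp_neg_mul_sq_mul_evenCosh hβ _)
    (integrable_exp_neg_mul_sq_mul_evenCosh hβ _), integral_exp_neg_mul_sq_mul_evenCosh hβ,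
    integral_exp_neg_mul_sq_mul_evenCosh hβ, sqrt_div' _ hβ.le]
  have hπ : √π ≠ 0 := (sqrt_pos.2 pi_pos).ne'
  field_simp
  ring_nf

theorem chiVac_exp_eq_integral (A z : ℝ) :
    chiVac A (exp z) = ∫ u : ℝ, vacDensity A u * dualChar (u ^ 2) z := by
  have h (u : ℝ) : vacDensity A u * dualChar (u ^ 2) z =
      exp (-(z / 4)) * (exp (-exp (-z) * u ^ 2) * vacDensity A u) := by
    rw [dualChar, sub_eq_add_neg, exp_add]; ring_nf
  have hA : 2 * π * A / exp (-z) = 2 * π * exp z * A := by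
    rw [exp_neg]; field_simp
  have hA1 : 2 * π * (A - 1) / exp (-z) = 2 * π * exp z * A + -(2 * π * exp z) := by
    rw [exp_neg]; field_simp; ring
  have hz : exp (-z / 2) = (exp (z / 4) ^ 2)⁻¹ := by
    rw [← exp_nat_mul, ← exp_neg]; ring_nf
  simp_rw [h]
  rw [integral_const_mul, integral_exp_neg_mul_sq_mul_vacDensity (exp_pos _), chiVac,
    rpow_def_of_pos (exp_pos z), log_exp, ← exp_half (-z), hA, hA1, hz, exp_add, exp_neg,
    exp_neg, mul_one_div]
  field_simp

theorem continuous_vacDensity_mul_iteratedDeriv_dualChar (A : ℝ) (m : ℕ) (x : ℝ) :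
    Continuous fun u => vacDensity A u * iteratedDeriv m (dualChar (u ^ 2)) x := by
  simp_rw [iteratedDeriv_dualChar, dualChar]
  exact (continuous_vacDensity A).mul (by fun_prop)

theorem exists_integrable_bound_vacDensity_mul_iteratedDeriv_dualChar (A : ℝ) (m : ℕ) :
    ∃ bound : ℝ → ℝ, Integrable bound ∧ ∀ x ∈ Set.Ioo (-1 : ℝ) 1, ∀ u : ℝ,
      ‖vacDensity A u * iteratedDeriv m (dualChar (u ^ 2)) x‖ ≤ bound u := by
  obtain ⟨C, hC⟩ := exists_abs_iteratedDeriv_dualChar_sq_le m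
  refine ⟨fun u => C * |exp (-(exp (-1) / 2) * u ^ 2) * vacDensity A u|,
    (integrable_exp_neg_mul_sq_mul_vacDensity (by positivity) A).abs.const_mul C,
    fun x hx u => ?_⟩
  beta_reduce
  rw [norm_eq_abs, abs_mul, abs_mul, abs_of_pos (exp_pos _), mul_comm]
  calc |iteratedDeriv m (dualChar (u ^ 2)) x| * |vacDensity A u|
      ≤ C * exp (-(exp (-1) / 2) * u ^ 2) * |vacDensity A u| := by gcongr; exact hC x hx u
    _ = _ := by ring

theorem integrable_vacDensity_mul_iteratedDeriv_dualChar (A : ℝ) (m : ℕ) {x : ℝ}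
    (hx : x ∈ Set.Ioo (-1 : ℝ) 1) :
    Integrable fun u => vacDensity A u * iteratedDeriv m (dualChar (u ^ 2)) x := by
  obtain ⟨bound, hbound_int, hbound⟩ :=
    exists_integrable_bound_vacDensity_mul_iteratedDeriv_dualChar A m
  exact hbound_int.mono'
    (continuous_vacDensity_mul_iteratedDeriv_dualChar A m x).aestronglyMeasurable
    (ae_of_all _ (hbound x hx))

theorem iteratedDeriv_chiVac_exp (A : ℝ) (m : ℕ) :
    iteratedDeriv m (fun z => chiVac A (exp z)) 0 =
      ∫ u, vacDensity A u * iteratedDeriv m (dualChar (u ^ 2)) 0 := by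
  have hconst (m : ℕ) (x u : ℝ) :
      iteratedDeriv m (fun x => vacDensity A u * dualChar (u ^ 2) x) x =
        vacDensity A u * iteratedDeriv m (dualChar (u ^ 2)) x :=
    iteratedDeriv_const_mul_field _ _
  rw [funext (chiVac_exp_eq_integral A), iteratedDeriv_integral_of_dominated isOpen_Ioo
    (fun u => contDiff_const.mul (contDiff_dualChar _))
    (fun m x => by simpa only [hconst] using
      (continuous_vacDensity_mul_iteratedDeriv_dualChar A m x).aestronglyMeasurable)
    (fun m => by simpa only [hconst] using
      exists_integrable_bound_vacDensity_mul_iteratedDeriv_dualChar A m)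
    m (by norm_num)]
  simp_rw [hconst]

theorem derivFunctional_chiVac (A : ℝ) (N : ℕ) (w : ℕ → ℝ) :
    derivFunctional N w (chiVac A) = ∫ u, vacDensity A u *
      derivFunctional N w (fun t => chiHat A (A + u ^ 2 / (2 * π)) (1 / t)) := by
  have hdual (u : ℝ) :
      (fun z => chiHat A (A + u ^ 2 / (2 * π)) (1 / exp z)) = dualChar (u ^ 2) := by
    funext z
    rw [chiHat_one_div_exp]
    field_simp
    ring_nf
  have hint : ∀ m ∈ Finset.range (N + 1), Integrable fun u =>
      w m * (vacDensity A u * iteratedDeriv m (dualChar (u ^ 2)) 0) :=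
    fun m _ => (integrable_vacDensity_mul_iteratedDeriv_dualChar A m (by norm_num)).const_mul _
  simp_rw [derivFunctional, hdual, iteratedDeriv_chiVac_exp, ← integral_const_mul,
    ← integral_finsetSum _ hint, Finset.mul_sum]
  congr! 3 with u m
  ring

theorem no_upper_bound_functional_below_threshold_general (c : ℝ) (hc : 1 < c)
    (hstar : ℝ) (hle : hstar ≤ (c - 1) / 24)
    (N : ℕ) (w : ℕ → ℝ)
    (hneg : ∀ h : ℝ, hstar ≤ h →
      derivFunctional N w (fun t => chiHat ((c - 1) / 24) h (1 / t)) ≤ 0) :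
    derivFunctional N w (chiVac ((c - 1) / 24)) ≤ 0 := by
  rw [derivFunctional_chiVac]
  refine integral_nonpos fun u => mul_nonpos_of_nonneg_of_nonpos
    (vacDensity_nonneg (by linarith) u) (hneg _ (hle.trans ?_))
  exact le_add_of_nonneg_right (by positivity)

/-- **No finite-order derivative functional can certify an upper bound on `g` when the
boundary gap is at most `(c−1)/24`.**
Let `c > 1`, `A = (c−1)/24` and `0 ≤ h* ≤ A`. If a derivative functional `ω` satisfies
`ω[t ↦ χ̂_h(1/t)] ≤ 0` for every `h ≥ h*`, then `ω[χ̂_vac] ≤ 0`; in particular `ω` cannot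
also satisfy the normalization `ω[χ̂_vac] = 1`. -/
theorem no_upper_bound_functional_below_threshold (c : ℝ) (hc : 1 < c)
    (hstar : ℝ) (h0 : 0 ≤ hstar) (hle : hstar ≤ (c - 1) / 24)
    (N : ℕ) (w : ℕ → ℝ)
    (hneg : ∀ h : ℝ, hstar ≤ h →
      derivFunctional N w (fun t => chiHat ((c - 1) / 24) h (1 / t)) ≤ 0) :
    derivFunctional N w (chiVac ((c - 1) / 24)) ≤ 0 :=
  no_upper_bound_functional_below_threshold_general c hc hstar hle N w hneg
end

section
/- Let c > 1, A = (c−1)/24, and let Δ* be a real number with 0 ≤ Δ* ≤ 2A = (c−1)/12. Let N ∈ ℕ and ω_0, ..., ω_N ∈ ℝ, and define the derivative functional ω[f] = Σ_{m=0}^N ω_m · (d/dz)^m [f(e^z)] evaluated at z = 0. If ω[t ↦ χ̂_{Δ/2}(t)] ≥ 0 for every Δ ≥ Δ*, then ω[t ↦ χ̂_vac(1/t)] ≥ 0. In particular, when the assumed bulk scalar gap is at most (c−1)/12, the lower bound on g² obtained from any such functional is nonpositive and hence trivially satisfied in a unitary theory. -/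
open Real

section TLBAux
open Real MeasureTheory
namespace TLB

/-- integrand building block: `f y z = exp(z/4 − 2π y² e^z)` -/
noncomputable def f (y z : ℝ) : ℝ := Real.exp (z/4 - 2*π*(y^2*Real.exp z))

noncomputable def Q : ℕ → Polynomial ℝ
  | 0 => 1
  | m+1 => (Polynomial.C (1/4) - Polynomial.C (2*π) * Polynomial.X) * Q m
      + Polynomial.X * (Q m).derivative

lemma hasDerivAt_Qf (m : ℕ) (y z : ℝ) :
    HasDerivAt (fun z => (Q m).eval (y^2*Real.exp z) * f y z)
      ((Q (m+1)).eval (y^2*Real.exp z) * f y z) z := by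
  have hu : HasDerivAt (fun z => y^2*Real.exp z) (y^2*Real.exp z) z :=
    (Real.hasDerivAt_exp z).const_mul (y^2)
  have hq : HasDerivAt (fun z => (Q m).eval (y^2*Real.exp z))
      ((Q m).derivative.eval (y^2*Real.exp z) * (y^2*Real.exp z)) z :=
    by have := ((Q m).hasDerivAt (y^2*Real.exp z)).comp z hu; exact this
  have hg : HasDerivAt (fun z => z/4 - 2*π*(y^2*Real.exp z))
      (1/4 - 2*π*(y^2*Real.exp z)) z := by
    exact ((hasDerivAt_id z).div_const 4).sub (hu.const_mul (2*π))
  have hf : HasDerivAt (fun z => Real.exp (z/4 - 2*π*(y^2*Real.exp z)))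
      ((1/4 - 2*π*(y^2*Real.exp z)) * Real.exp (z/4 - 2*π*(y^2*Real.exp z))) z := by
    simpa [mul_comm] using hg.exp
  simp only [f]
  have := hq.mul hf
  convert this using 1
  case e'_4 => rfl
  case e'_5 => rfl
  case e'_8 => rfl
  simp only [Q, Polynomial.eval_add, Polynomial.eval_mul, Polynomial.eval_sub,
    Polynomial.eval_C, Polynomial.eval_X]
  ring

lemma D_eq (m : ℕ) (y : ℝ) :
    iteratedDeriv m (f y) = fun z => (Q m).eval (y^2*Real.exp z) * f y z := by
  induction m with
  | zero => simp [iteratedDeriv_zero, Q]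
  | succ m ih =>
      rw [iteratedDeriv_succ, ih]
      funext z
      exact (hasDerivAt_Qf m y z).deriv

lemma hasDerivAt_D (m : ℕ) (y z : ℝ) :
    HasDerivAt (iteratedDeriv m (f y)) (iteratedDeriv (m+1) (f y) z) z := by
  rw [D_eq m, D_eq (m+1)]
  exact hasDerivAt_Qf m y z

end TLB
end TLBAux

section Chunk2
open Real MeasureTheory Finset
namespace TLB

lemma poly_bound (p : Polynomial ℝ) {u : ℝ} (hu : 0 ≤ u) :
    |p.eval u| ≤ (∑ i ∈ Finset.range (p.natDegree+1), |p.coeff i|) * (1+u)^p.natDegree := by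
  rw [Polynomial.eval_eq_sum_range]
  calc |∑ i ∈ Finset.range (p.natDegree+1), p.coeff i * u ^ i|
      ≤ ∑ i ∈ Finset.range (p.natDegree+1), |p.coeff i * u ^ i| :=
        Finset.abs_sum_le_sum_abs _ _
    _ ≤ ∑ i ∈ Finset.range (p.natDegree+1), |p.coeff i| * (1+u)^p.natDegree := by
        apply Finset.sum_le_sum
        intro i hi
        rw [abs_mul, abs_pow, abs_of_nonneg hu]
        apply mul_le_mul_of_nonneg_left _ (abs_nonneg _)
        calc u ^ i ≤ (1+u) ^ i := pow_le_pow_left₀ hu (by linarith) i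
          _ ≤ (1+u) ^ p.natDegree := by
              apply pow_le_pow_right₀ (by linarith)
              exact Nat.lt_succ_iff.mp (Finset.mem_range.mp hi)
    _ = _ := by rw [Finset.sum_mul]

lemma one_add_pow_le (d : ℕ) {u : ℝ} (hu : 0 ≤ u) :
    (1+u)^d ≤ 2^d * (1 + (d.factorial : ℝ)) * Real.exp u := by
  have h1 : (1+u)^d ≤ 2^d * (1 + u^d) := by
    rcases le_total u 1 with h | h
    · calc (1+u)^d ≤ 2^d := by
            apply pow_le_pow_left₀ (by linarith) (by linarith)
        _ ≤ 2^d * (1 + u^d) := by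
            nlinarith [pow_nonneg hu d, pow_pos (show (0:ℝ) < 2 by norm_num) d]
    · calc (1+u)^d ≤ (2*u)^d := by
            apply pow_le_pow_left₀ (by linarith) (by linarith)
        _ = 2^d * u^d := by rw [mul_pow]
        _ ≤ 2^d * (1 + u^d) := by
            nlinarith [pow_pos (show (0:ℝ) < 2 by norm_num) d, pow_nonneg hu d]
  have h2 : u^d ≤ (d.factorial : ℝ) * Real.exp u := by
    have := Real.sum_le_exp_of_nonneg hu (d+1)
    have hle : u^d / (d.factorial : ℝ) ≤ Real.exp u := by
      refine le_trans ?_ this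
      exact Finset.single_le_sum (f := fun i => u^i / (i.factorial : ℝ))
        (fun i _ => by positivity) (Finset.self_mem_range_succ d)
    have hfac : (0:ℝ) < (d.factorial : ℝ) := by exact_mod_cast d.factorial_pos
    calc u^d = u^d / (d.factorial : ℝ) * (d.factorial : ℝ) := by field_simp
      _ ≤ Real.exp u * (d.factorial : ℝ) := by
          exact mul_le_mul_of_nonneg_right hle hfac.le
      _ = _ := by ring
  have hexp : (1:ℝ) ≤ Real.exp u := Real.one_le_exp hu
  calc (1+u)^d ≤ 2^d * (1 + u^d) := h1
    _ ≤ 2^d * (1 + (d.factorial : ℝ) * Real.exp u) := by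
        apply mul_le_mul_of_nonneg_left _ (by positivity)
        linarith
    _ ≤ 2^d * ((1 + (d.factorial : ℝ)) * Real.exp u) := by
        apply mul_le_mul_of_nonneg_left _ (by positivity)
        have hfac : (0:ℝ) ≤ (d.factorial : ℝ) := by positivity
        nlinarith
    _ = _ := by ring

/-- Bound on the iterated derivatives, uniform on a ball. -/
lemma D_bound (m : ℕ) (z₀ : ℝ) : ∃ C : ℝ, 0 ≤ C ∧ ∀ y z : ℝ, |z - z₀| < 1 →
    |iteratedDeriv m (f y) z| ≤ C * Real.exp (-(π*Real.exp (z₀-1)) * y^2) := by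
  set p := Q m
  set S := ∑ i ∈ Finset.range (p.natDegree+1), |p.coeff i| with hS
  have hS0 : 0 ≤ S := Finset.sum_nonneg (fun i _ => abs_nonneg _)
  set d := p.natDegree
  refine ⟨S * (2^d * (1 + (d.factorial : ℝ))) * Real.exp ((|z₀|+1)/4), by positivity, ?_⟩
  intro y z hz
  rw [D_eq]
  set u := y^2 * Real.exp z with hu
  have hu0 : 0 ≤ u := by positivity
  have habs : |p.eval u * f y z| = |p.eval u| * f y z := by
    rw [abs_mul, abs_of_pos (show (0:ℝ) < f y z from Real.exp_pos _)]
  rw [habs]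
  have h1 : |p.eval u| ≤ S * (1+u)^d := poly_bound p hu0
  have hfle : f y z = Real.exp (z/4) * Real.exp (-(2*π*u)) := by
    rw [f, ← Real.exp_add, hu]; ring_nf
  have key : (1+u)^d * Real.exp (-(2*π*u)) ≤
      2^d * (1 + (d.factorial : ℝ)) * Real.exp (-(π*u)) := by
    have := one_add_pow_le d hu0
    have hexp : Real.exp u * Real.exp (-(2*π*u)) ≤ Real.exp (-(π*u)) := by
      rw [← Real.exp_add, Real.exp_le_exp]
      nlinarith [Real.pi_gt_three, hu0]
    calc (1+u)^d * Real.exp (-(2*π*u))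
        ≤ (2^d * (1 + (d.factorial : ℝ)) * Real.exp u) * Real.exp (-(2*π*u)) := by
          apply mul_le_mul_of_nonneg_right this (Real.exp_pos _).le
      _ = 2^d * (1 + (d.factorial : ℝ)) * (Real.exp u * Real.exp (-(2*π*u))) := by ring
      _ ≤ _ := by
          apply mul_le_mul_of_nonneg_left hexp (by positivity)
  have hz4 : Real.exp (z/4) ≤ Real.exp ((|z₀|+1)/4) := by
    rw [Real.exp_le_exp]
    have := abs_lt.mp hz
    have := le_abs_self z₀
    linarith [this]
  have hgauss : Real.exp (-(π*u)) ≤ Real.exp (-(π*Real.exp (z₀-1)) * y^2) := by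
    rw [Real.exp_le_exp, hu]
    have hez : Real.exp (z₀-1) ≤ Real.exp z := by
      rw [Real.exp_le_exp]
      have := abs_lt.mp hz
      linarith
    nlinarith [Real.pi_pos, mul_le_mul_of_nonneg_left hez (sq_nonneg y)]
  calc |p.eval u| * f y z ≤ (S * (1+u)^d) * (Real.exp (z/4) * Real.exp (-(2*π*u))) := by
        rw [hfle]
        apply mul_le_mul h1 le_rfl (by positivity) (by positivity)
    _ = (Real.exp (z/4)) * ((1+u)^d * Real.exp (-(2*π*u))) * S := by ring
    _ ≤ (Real.exp ((|z₀|+1)/4)) * (2^d * (1 + (d.factorial : ℝ)) * Real.exp (-(π*u))) * S := by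
        apply mul_le_mul_of_nonneg_right _ hS0
        apply mul_le_mul hz4 key (by positivity) (by positivity)
    _ ≤ (Real.exp ((|z₀|+1)/4)) * (2^d * (1 + (d.factorial : ℝ)) *
          Real.exp (-(π*Real.exp (z₀-1)) * y^2)) * S := by
        apply mul_le_mul_of_nonneg_right _ hS0
        apply mul_le_mul_of_nonneg_left _ (by positivity)
        apply mul_le_mul_of_nonneg_left hgauss (by positivity)
    _ = _ := by ring

end TLB
end Chunk2

section Chunk3
open Real MeasureTheory
namespace TLB

noncomputable def ψ (B y : ℝ) : ℝ :=
  if 0 ≤ B then Real.cosh (4*π*Real.sqrt B*y) else Real.cos (4*π*Real.sqrt (-B)*y)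

noncomputable def ρ (A y : ℝ) : ℝ := Real.sqrt 2 * (ψ A y - ψ (A-1) y)

lemma ψ_self_le {A y : ℝ} (hA : 0 ≤ A) : ψ (A-1) y ≤ ψ A y := by
  unfold ψ
  rw [if_pos hA]
  split_ifs with h
  · rw [Real.cosh_le_cosh]
    have hs : Real.sqrt (A-1) ≤ Real.sqrt A := Real.sqrt_le_sqrt (by linarith)
    rcases le_total y 0 with hy | hy
    · rw [abs_of_nonpos (mul_nonpos_of_nonneg_of_nonpos (by positivity) hy),
        abs_of_nonpos (mul_nonpos_of_nonneg_of_nonpos (by positivity) hy)]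
      nlinarith [Real.pi_pos, mul_le_mul_of_nonpos_right hs hy]
    · rw [abs_of_nonneg (by positivity), abs_of_nonneg (by positivity)]
      nlinarith [Real.pi_pos, mul_le_mul_of_nonneg_right hs hy]
  · exact le_trans (Real.cos_le_one _) (Real.one_le_cosh _)

lemma ψ_neg_le {A y : ℝ} (hA : 0 ≤ A) : -(ψ A y) ≤ ψ (A-1) y := by
  unfold ψ
  rw [if_pos hA]
  split_ifs with h
  · have := Real.cosh_pos (x := 4*π*Real.sqrt (A-1)*y)
    have := Real.cosh_pos (x := 4*π*Real.sqrt A*y)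
    linarith
  · have := Real.neg_one_le_cos (4*π*Real.sqrt (1-(A:ℝ))*y)
    have h1 : -(A-1) = 1 - A := by ring
    rw [h1]
    have := Real.one_le_cosh (4*π*Real.sqrt A*y)
    linarith [Real.neg_one_le_cos (4*π*Real.sqrt (1-A)*y)]

lemma ρ_nonneg {A : ℝ} (hA : 0 ≤ A) (y : ℝ) : 0 ≤ ρ A y := by
  unfold ρ
  have := ψ_self_le (y := y) hA
  have h2 : (0:ℝ) ≤ Real.sqrt 2 := Real.sqrt_nonneg 2
  nlinarith

lemma ρ_le {A : ℝ} (hA : 0 ≤ A) (y : ℝ) :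
    ρ A y ≤ Real.sqrt 2 * (Real.exp (4*π*Real.sqrt A*y) + Real.exp (-(4*π*Real.sqrt A*y))) := by
  unfold ρ
  have h1 : ψ A y - ψ (A-1) y ≤ 2 * Real.cosh (4*π*Real.sqrt A*y) := by
    have h2 := ψ_neg_le (y := y) hA
    have h3 : ψ A y = Real.cosh (4*π*Real.sqrt A*y) := if_pos hA
    rw [h3] at h2 ⊢
    linarith
  have h2 : (0:ℝ) ≤ Real.sqrt 2 := Real.sqrt_nonneg 2
  calc Real.sqrt 2 * (ψ A y - ψ (A-1) y) ≤ Real.sqrt 2 * (2 * Real.cosh (4*π*Real.sqrt A*y)) :=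
        mul_le_mul_of_nonneg_left h1 h2
    _ = _ := by rw [Real.cosh_eq]; ring

lemma ψ_continuous (B : ℝ) : Continuous (ψ B) := by
  unfold ψ
  split_ifs with h
  · exact Real.continuous_cosh.comp (continuous_const.mul continuous_id)
  · exact Real.continuous_cos.comp (continuous_const.mul continuous_id)

lemma ρ_continuous (A : ℝ) : Continuous (ρ A) :=
  continuous_const.mul ((ψ_continuous A).sub (ψ_continuous (A-1)))

/-- Gaussian with linear shift. -/
lemma exp_gauss_eq (b c : ℝ) (hb : 0 < b) (y : ℝ) :
    Real.exp (c*y) * Real.exp (-b*y^2)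
      = Real.exp (c^2/(4*b)) * Real.exp (-b*(y - c/(2*b))^2) := by
  rw [← Real.exp_add, ← Real.exp_add]
  congr 1
  field_simp
  ring

lemma integrable_exp_gauss (b c : ℝ) (hb : 0 < b) :
    Integrable (fun y => Real.exp (c*y) * Real.exp (-b*y^2)) := by
  have : (fun y => Real.exp (c*y) * Real.exp (-b*y^2))
      = fun y => Real.exp (c^2/(4*b)) * Real.exp (-b*(y - c/(2*b))^2) := by
    funext y; exact exp_gauss_eq b c hb y
  rw [this]
  exact ((integrable_exp_neg_mul_sq hb).comp_sub_right (c/(2*b))).const_mul _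

lemma integral_exp_gauss (b c : ℝ) (hb : 0 < b) :
    ∫ y : ℝ, Real.exp (c*y) * Real.exp (-b*y^2)
      = Real.sqrt (π/b) * Real.exp (c^2/(4*b)) := by
  have : (fun y : ℝ => Real.exp (c*y) * Real.exp (-b*y^2))
      = fun y => Real.exp (c^2/(4*b)) * Real.exp (-b*(y - c/(2*b))^2) := by
    funext y; exact exp_gauss_eq b c hb y
  rw [this, MeasureTheory.integral_const_mul,
    MeasureTheory.integral_sub_right_eq_self (fun y => Real.exp (-b*y^2)) (c/(2*b)),
    integral_gaussian]
  ring

lemma integral_cosh_gauss (b c : ℝ) (hb : 0 < b) :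
    ∫ y : ℝ, Real.cosh (c*y) * Real.exp (-b*y^2)
      = Real.sqrt (π/b) * Real.exp (c^2/(4*b)) := by
  have heq : (fun y : ℝ => Real.cosh (c*y) * Real.exp (-b*y^2))
      = fun y => (Real.exp (c*y) * Real.exp (-b*y^2)
        + Real.exp ((-c)*y) * Real.exp (-b*y^2)) / 2 := by
    funext y
    rw [Real.cosh_eq]
    ring_nf
  rw [heq]
  rw [integral_div, MeasureTheory.integral_add (integrable_exp_gauss b c hb)
    (integrable_exp_gauss b (-c) hb), integral_exp_gauss b c hb, integral_exp_gauss b (-c) hb]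
  have : (-c)^2 = c^2 := by ring
  rw [this]
  ring

lemma integrable_cosh_gauss (b c : ℝ) (hb : 0 < b) :
    Integrable (fun y => Real.cosh (c*y) * Real.exp (-b*y^2)) := by
  have heq : (fun y : ℝ => Real.cosh (c*y) * Real.exp (-b*y^2))
      = fun y => (Real.exp (c*y) * Real.exp (-b*y^2)
        + Real.exp ((-c)*y) * Real.exp (-b*y^2)) / 2 := by
    funext y
    rw [Real.cosh_eq]
    ring_nf
  rw [heq]
  exact ((integrable_exp_gauss b c hb).add (integrable_exp_gauss b (-c) hb)).div_const 2

lemma integrable_cos_gauss (b c : ℝ) (hb : 0 < b) :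
    Integrable (fun y => Real.cos (c*y) * Real.exp (-b*y^2)) := by
  apply Integrable.mono' (integrable_exp_neg_mul_sq hb)
  · exact ((Real.continuous_cos.comp (continuous_const.mul continuous_id)).mul
      (Real.continuous_exp.comp (continuous_const.mul (continuous_pow 2)))).aestronglyMeasurable
  · filter_upwards with y
    rw [Real.norm_eq_abs, abs_mul, abs_of_pos (Real.exp_pos _)]
    calc |Real.cos (c*y)| * Real.exp (-b*y^2) ≤ 1 * Real.exp (-b*y^2) := by
          apply mul_le_mul_of_nonneg_right (Real.abs_cos_le_one _) (Real.exp_pos _).le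
      _ = _ := by ring

lemma integral_cos_gauss (b c : ℝ) (hb : 0 < b) :
    ∫ y : ℝ, Real.cos (c*y) * Real.exp (-b*y^2)
      = Real.sqrt (π/b) * Real.exp (-c^2/(4*b)) := by
  have hre : ∀ y : ℝ, Real.cos (c*y) * Real.exp (-b*y^2)
      = (Complex.exp ((-(b:ℂ)) * (y:ℂ)^2 + ((c:ℂ)*Complex.I) * (y:ℂ) + 0)).re := by
    intro y
    have harg : (-(b:ℂ)) * (y:ℂ)^2 + ((c:ℂ)*Complex.I) * (y:ℂ) + 0
        = ((-b*y^2 : ℝ):ℂ) + ((c*y : ℝ):ℂ)*Complex.I := by push_cast; ring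
    rw [harg, Complex.exp_re]
    simp only [Complex.add_re, Complex.ofReal_re, Complex.mul_I_re, Complex.ofReal_im,
      Complex.add_im, Complex.mul_I_im, Complex.ofReal_pow]
    ring
  simp_rw [hre]
  have hint : Integrable (fun y : ℝ =>
      Complex.exp ((-(b:ℂ)) * (y:ℂ)^2 + ((c:ℂ)*Complex.I) * (y:ℂ) + 0)) := by
    apply integrable_cexp_quadratic (by simpa using hb : (0:ℝ) < ((b:ℂ)).re)
  have hre2 := integral_re hint
  simp only [RCLike.re_to_complex] at hre2
  rw [hre2]
  rw [integral_cexp_quadratic (by simpa using hb : ((-(b:ℂ))).re < 0)]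
  have h1 : ((π:ℂ) / -(-(b:ℂ))) = ((π/b : ℝ) : ℂ) := by
    push_cast; ring
  have h2 : (0 : ℂ) - ((c:ℂ)*Complex.I)^2 / (4 * (-(b:ℂ))) = ((-c^2/(4*b) : ℝ) : ℂ) := by
    have hb' : (b:ℂ) ≠ 0 := by exact_mod_cast hb.ne'
    field_simp
    ring_nf
    simp [Complex.I_sq]
    linear_combination (c:ℂ)^2 * mul_inv_cancel₀ hb'
  rw [h1, h2]
  rw [show (1/2 : ℂ) = ((1/2 : ℝ) : ℂ) by norm_num,
    ← Complex.ofReal_cpow (by positivity) (1/2 : ℝ),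
    ← Complex.ofReal_exp, ← Complex.ofReal_mul, Complex.ofReal_re, ← Real.sqrt_eq_rpow]

end TLB
end Chunk3

section Chunk4
open Real MeasureTheory
namespace TLB

lemma sqrt_pi_div (s : ℝ) (hs : 0 < s) :
    Real.sqrt (π/(2*π*s)) = (Real.sqrt (2*s))⁻¹ := by
  have hpi := Real.pi_pos
  have : π/(2*π*s) = (2*s)⁻¹ := by field_simp
  rw [this, Real.sqrt_inv]

lemma integral_ψ (B s : ℝ) (hs : 0 < s) :
    ∫ y : ℝ, ψ B y * Real.exp (-(2*π*s)*y^2)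
      = (Real.sqrt (2*s))⁻¹ * Real.exp (2*π*B/s) := by
  have hb : 0 < 2*π*s := by positivity
  unfold ψ
  split_ifs with h
  · rw [integral_cosh_gauss _ _ hb, sqrt_pi_div s hs]
    congr 2
    rw [show (4*π*Real.sqrt B)^2 = 16*π^2*(Real.sqrt B^2) by ring, Real.sq_sqrt h]
    field_simp
    ring
  · rw [integral_cos_gauss _ _ hb, sqrt_pi_div s hs]
    congr 2
    rw [show (4*π*Real.sqrt (-B))^2 = 16*π^2*(Real.sqrt (-B)^2) by ring,
      Real.sq_sqrt (by linarith : (0:ℝ) ≤ -B)]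
    field_simp
    ring

lemma integrable_ψ (B s : ℝ) (hs : 0 < s) :
    Integrable (fun y => ψ B y * Real.exp (-(2*π*s)*y^2)) := by
  have hb : 0 < 2*π*s := by positivity
  unfold ψ
  split_ifs with h
  · exact integrable_cosh_gauss _ _ hb
  · exact integrable_cos_gauss _ _ hb

lemma sqrt_exp (z : ℝ) : Real.sqrt (Real.exp z) = Real.exp (z/2) := by
  rw [show Real.exp z = Real.exp (z/2)^2 by
    rw [sq, ← Real.exp_add]; congr 1; ring]
  exact Real.sqrt_sq (Real.exp_pos _).le

/-- The key integral representation of the (flipped) vacuum character. -/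
lemma base (A z : ℝ) : chiVac A (1/Real.exp z) = ∫ y : ℝ, ρ A y * f y z := by
  have hs : (0:ℝ) < Real.exp z := Real.exp_pos z
  have hfy : (fun y : ℝ => ρ A y * f y z)
      = fun y => (Real.sqrt 2 * Real.exp (z/4)) *
        (ψ A y * Real.exp (-(2*π*Real.exp z)*y^2)
          - ψ (A-1) y * Real.exp (-(2*π*Real.exp z)*y^2)) := by
    funext y
    rw [ρ, f, show z/4 - 2*π*(y^2*Real.exp z) = z/4 + -(2*π*Real.exp z)*y^2 by ring,
      Real.exp_add]
    ring
  rw [hfy, MeasureTheory.integral_const_mul,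
    MeasureTheory.integral_sub (integrable_ψ A (Real.exp z) hs)
      (integrable_ψ (A-1) (Real.exp z) hs),
    integral_ψ A (Real.exp z) hs, integral_ψ (A-1) (Real.exp z) hs]
  rw [chiVac]
  have h2 : Real.sqrt (2*Real.exp z) = Real.sqrt 2 * Real.exp (z/2) := by
    rw [Real.sqrt_mul (by norm_num : (0:ℝ) ≤ 2), sqrt_exp]
  have hsq2 : Real.sqrt 2 ≠ 0 := by positivity
  have h14 : (1/Real.exp z)^((1:ℝ)/4) = Real.exp (-(z/4)) := by
    rw [one_div, ← Real.exp_neg, Real.rpow_def_of_pos (Real.exp_pos _), Real.log_exp]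
    congr 1; ring
  have hinv : 1/Real.exp z = Real.exp (-z) := by rw [one_div, ← Real.exp_neg]
  rw [h14, hinv, h2]
  rw [show (Real.sqrt 2 * Real.exp (z/2))⁻¹ = (Real.sqrt 2)⁻¹ * Real.exp (-(z/2)) by
    rw [mul_inv, ← Real.exp_neg]]
  rw [div_eq_mul_inv (2*π*A), div_eq_mul_inv (2*π*(A-1)), ← Real.exp_neg]
  rw [mul_sub, mul_sub]
  rw [show Real.sqrt 2 * Real.exp (z/4) * ((Real.sqrt 2)⁻¹ * Real.exp (-(z/2)) *
        Real.exp (2*π*A*Real.exp (-z)))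
      = (Real.sqrt 2 * (Real.sqrt 2)⁻¹) * (Real.exp (z/4) * Real.exp (-(z/2)) *
        Real.exp (2*π*A*Real.exp (-z))) by ring,
    show Real.sqrt 2 * Real.exp (z/4) * ((Real.sqrt 2)⁻¹ * Real.exp (-(z/2)) *
        Real.exp (2*π*(A-1)*Real.exp (-z)))
      = (Real.sqrt 2 * (Real.sqrt 2)⁻¹) * (Real.exp (z/4) * Real.exp (-(z/2)) *
        Real.exp (2*π*(A-1)*Real.exp (-z))) by ring,
    mul_inv_cancel₀ hsq2, one_mul, one_mul]
  rw [← Real.exp_add, ← Real.exp_add, ← Real.exp_add, ← Real.exp_add]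
  rw [mul_sub, mul_one, ← Real.exp_add]
  congr 2 <;> ring

/-- Continuity in `y` of the integrand. -/
lemma cont_ρD (A : ℝ) (m : ℕ) (z : ℝ) :
    Continuous (fun y => ρ A y * iteratedDeriv m (f y) z) := by
  have hD : (fun y => iteratedDeriv m (f y) z)
      = fun y => (Q m).eval (y^2*Real.exp z) * f y z :=
    funext fun y => congrFun (D_eq m y) z
  apply (ρ_continuous A).mul
  rw [hD]
  apply Continuous.mul
  · exact (Q m).continuous.comp ((continuous_pow 2).mul continuous_const)
  · exact Real.continuous_exp.comp
      (continuous_const.sub (continuous_const.mul ((continuous_pow 2).mul continuous_const)))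

lemma integrable_bound (A C z : ℝ) (hC0 : 0 ≤ C) :
    Integrable (fun y => (Real.sqrt 2 *
        (Real.exp ((4*π*Real.sqrt A)*y) + Real.exp (-((4*π*Real.sqrt A)*y)))) *
      (C * Real.exp (-(π*Real.exp (z-1))*y^2))) := by
  have hb : (0:ℝ) < π*Real.exp (z-1) := by positivity
  have : (fun y => (Real.sqrt 2 *
        (Real.exp ((4*π*Real.sqrt A)*y) + Real.exp (-((4*π*Real.sqrt A)*y)))) *
      (C * Real.exp (-(π*Real.exp (z-1))*y^2)))
    = fun y => (Real.sqrt 2 * C) *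
        (Real.exp ((4*π*Real.sqrt A)*y) * Real.exp (-(π*Real.exp (z-1))*y^2)
          + Real.exp ((-(4*π*Real.sqrt A))*y) * Real.exp (-(π*Real.exp (z-1))*y^2)) := by
    funext y
    rw [neg_mul]
    ring
  rw [this]
  exact (((integrable_exp_gauss _ _ hb)).add ((integrable_exp_gauss _ _ hb))).const_mul _

lemma bound_ρD (A : ℝ) (hA : 0 ≤ A) {C z₀ : ℝ} (m : ℕ)
    (hC : ∀ y z : ℝ, |z - z₀| < 1 →
      |iteratedDeriv m (f y) z| ≤ C * Real.exp (-(π*Real.exp (z₀-1)) * y^2))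
    (y z : ℝ) (hz : |z - z₀| < 1) :
    ‖ρ A y * iteratedDeriv m (f y) z‖ ≤ (Real.sqrt 2 *
        (Real.exp ((4*π*Real.sqrt A)*y) + Real.exp (-((4*π*Real.sqrt A)*y)))) *
      (C * Real.exp (-(π*Real.exp (z₀-1))*y^2)) := by
  rw [Real.norm_eq_abs, abs_mul, abs_of_nonneg (ρ_nonneg hA y)]
  have h1 := ρ_le hA y
  have h2 := hC y z hz
  apply mul_le_mul h1 h2 (abs_nonneg _) (by positivity)

lemma integrable_ρD (A : ℝ) (hA : 0 ≤ A) (m : ℕ) (z : ℝ) :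
    Integrable (fun y => ρ A y * iteratedDeriv m (f y) z) := by
  obtain ⟨C, hC0, hC⟩ := D_bound m z
  apply Integrable.mono' (integrable_bound A C z hC0)
    (cont_ρD A m z).aestronglyMeasurable
  filter_upwards with y
  exact bound_ρD A hA m hC y z (by simp)

end TLB
end Chunk4

section Chunk5Aux
open Real MeasureTheory Metric
namespace TLB

lemma key (A : ℝ) (hA : 0 ≤ A) (m : ℕ) : ∀ z : ℝ,
    iteratedDeriv m (fun z => chiVac A (1/Real.exp z)) z
      = ∫ y : ℝ, ρ A y * iteratedDeriv m (f y) z := by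
  induction m with
  | zero =>
      intro z
      simp only [iteratedDeriv_zero]
      exact base A z
  | succ m ih =>
      intro z
      rw [iteratedDeriv_succ]
      rw [show iteratedDeriv m (fun z => chiVac A (1/Real.exp z))
        = fun z => ∫ y : ℝ, ρ A y * iteratedDeriv m (f y) z from funext ih]
      obtain ⟨C, hC0, hC⟩ := D_bound (m+1) z
      have hmain := hasDerivAt_integral_of_dominated_loc_of_deriv_le
        (F := fun z' y => ρ A y * iteratedDeriv m (f y) z')
        (F' := fun z' y => ρ A y * iteratedDeriv (m+1) (f y) z')
        (x₀ := z)
        (bound := fun y => (Real.sqrt 2 *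
            (Real.exp ((4*π*Real.sqrt A)*y) + Real.exp (-((4*π*Real.sqrt A)*y)))) *
          (C * Real.exp (-(π*Real.exp (z-1))*y^2)))
        (Metric.ball_mem_nhds z one_pos)
        (Filter.Eventually.of_forall fun z' => (cont_ρD A m z').aestronglyMeasurable)
        (integrable_ρD A hA m z)
        (cont_ρD A (m+1) z).aestronglyMeasurable
        (Filter.Eventually.of_forall fun y => fun z' hz' =>
          bound_ρD A hA (m+1) hC y z' (by simpa [Real.dist_eq] using hz'))
        (integrable_bound A C z hC0)
        (Filter.Eventually.of_forall fun y => fun z' _ =>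
          (hasDerivAt_D m y z').const_mul (ρ A y))
      exact hmain.2.deriv

lemma f_eq_chiHat (A y : ℝ) : (fun z => chiHat A (A + y^2) (Real.exp z)) = f y := by
  funext z
  rw [chiHat, f, Real.rpow_def_of_pos (Real.exp_pos _), Real.log_exp, ← Real.exp_add]
  congr 1
  ring

end TLB

end Chunk5Aux

/-- **Any lower bound on `g²` from a derivative functional is trivial when the bulk scalar
gap is at most `(c−1)/12`.**
Let `c > 1`, `A = (c−1)/24` and `0 ≤ Δ* ≤ 2A`. If a derivative functional `ω` satisfies
`ω[t ↦ χ̂_{Δ/2}(t)] ≥ 0` for every `Δ ≥ Δ*`, then `ω[t ↦ χ̂_vac(1/t)] ≥ 0`. -/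
theorem trivial_lower_bound_below_threshold (c : ℝ) (hc : 1 < c)
    (Δstar : ℝ) (hΔ0 : 0 ≤ Δstar) (hΔle : Δstar ≤ (c - 1) / 12)
    (N : ℕ) (w : ℕ → ℝ)
    (hpos : ∀ Δ : ℝ, Δstar ≤ Δ →
      0 ≤ derivFunctional N w (fun t => chiHat ((c - 1) / 24) (Δ / 2) t)) :
    0 ≤ derivFunctional N w (fun t => chiVac ((c - 1) / 24) (1 / t)) := by
  set A := (c - 1) / 24 with hAdef
  have hA : 0 < A := by
    have : 0 < c - 1 := by linarith
    positivity
  have hstep : derivFunctional N w (fun t => chiVac A (1 / t))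
      = ∫ y : ℝ, TLB.ρ A y * (∑ m ∈ Finset.range (N+1),
          w m * iteratedDeriv m (TLB.f y) 0) := by
    have h0 : derivFunctional N w (fun t => chiVac A (1 / t))
        = ∑ m ∈ Finset.range (N+1), w m *
            iteratedDeriv m (fun z => chiVac A (1/Real.exp z)) 0 := rfl
    rw [h0]
    have h1 : ∀ m ∈ Finset.range (N+1), w m *
        iteratedDeriv m (fun z => chiVac A (1/Real.exp z)) 0
        = ∫ y : ℝ, w m * (TLB.ρ A y * iteratedDeriv m (TLB.f y) 0) := by
      intro m _
      rw [TLB.key A hA.le m 0, MeasureTheory.integral_const_mul]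
    rw [Finset.sum_congr rfl h1,
      ← MeasureTheory.integral_finset_sum _
        (fun m _ => ((TLB.integrable_ρD A hA.le m 0).const_mul (w m)))]
    congr 1
    funext y
    rw [Finset.mul_sum]
    apply Finset.sum_congr rfl
    intro m _
    ring
  rw [hstep]
  apply MeasureTheory.integral_nonneg
  intro y
  have hρ := TLB.ρ_nonneg hA.le y
  have hgap : Δstar ≤ 2*A + 2*y^2 := by
    have h2A : (c-1)/12 = 2*A := by rw [hAdef]; ring
    nlinarith [sq_nonneg y]
  have hp := hpos (2*A + 2*y^2) hgap
  have hdf : derivFunctional N w (fun t => chiHat A ((2*A + 2*y^2)/2) t)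
      = ∑ m ∈ Finset.range (N+1), w m * iteratedDeriv m (TLB.f y) 0 := by
    unfold derivFunctional
    apply Finset.sum_congr rfl
    intro m _
    have hfun : (fun z => chiHat A ((2*A + 2*y^2)/2) (Real.exp z)) = TLB.f y := by
      rw [show (2*A + 2*y^2)/2 = A + y^2 by ring]
      exact TLB.f_eq_chiHat A y
    exact congrArg (fun g => w m * iteratedDeriv m g 0) hfun
  rw [hdf] at hp
  exact mul_nonneg hρ hp
end

section
/- Let c > 1 and γ > 0, and let W be a real linear functional on the space of real-valued functions on ℝ_{>0} satisfying the upper-bound feasibility conditions with boundary gap γ: (a) W[χ̂_vac] > 0; (b) W[t ↦ χ̂_{Δ/2}(t)] ≥ 0 for every Δ > 0; (c) W[t ↦ χ̂_h(1/t)] ≤ 0 for every h ≥ γ. Assume the certified value v = W[t ↦ χ̂_vac(1/t)] / W[χ̂_vac] is positive. Then the functional W' defined by W'[f] = −W[t ↦ f(1/t)] satisfies the lower-bound feasibility conditions with bulk gap 2γ, namely: (a') −W'[χ̂_vac] > 0; (b') W'[t ↦ χ̂_{Δ/2}(t)] ≥ 0 for every Δ ≥ 2γ; (c') W'[t ↦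 χ̂_h(1/t)] ≤ 0 for every h > 0; and its certified lower-bound value equals the reciprocal: (−W'[t ↦ χ̂_vac(1/t)]) / (−W'[χ̂_vac]) = 1/v. Consequently the optimal upper bound g₊ on g under boundary gap γ and the optimal lower bound g₋ on g under bulk gap 2γ satisfy g₋ = g₊⁻¹, and mutual compatibility of the two gap assumptions forces g₊ ≥ 1. -/
open Real

/-- **Reciprocity between upper-bound and lower-bound functionals (`g₋ = g₊⁻¹`).**
Let `c > 1`, `γ > 0`, `A = (c−1)/24`, and let `W` be a real linear functional on the space
of real-valued functions on `ℝ_{>0}` satisfying the upper-bound feasibility conditions with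
boundary gap `γ`:
(a) `W[χ̂_vac] > 0`; (b) `W[t ↦ χ̂_{Δ/2}(t)] ≥ 0` for every `Δ > 0`;
(c) `W[t ↦ χ̂_h(1/t)] ≤ 0` for every `h ≥ γ`;
and assume the certified value `v = W[t ↦ χ̂_vac(1/t)] / W[χ̂_vac]` is positive.
Then the functional `W'` with `W'[f] = −W[t ↦ f(1/t)]` satisfies the lower-bound
feasibility conditions with bulk gap `2γ`:
(a') `−W'[χ̂_vac] > 0`; (b') `W'[t ↦ χ̂_{Δ/2}(t)] ≥ 0` for every `Δ ≥ 2γ`;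
(c') `W'[t ↦ χ̂_h(1/t)] ≤ 0` for every `h > 0`;
and its certified lower-bound value is the reciprocal:
`(−W'[t ↦ χ̂_vac(1/t)]) / (−W'[χ̂_vac]) = 1/v`. -/
theorem upper_lower_functional_reciprocity (c : ℝ) (hc : 1 < c) (γ : ℝ) (hγ : 0 < γ)
    (W : ({t : ℝ // 0 < t} → ℝ) →ₗ[ℝ] ℝ)
    (ha : 0 < W (fun t => chiVac ((c - 1) / 24) t.1))
    (hb : ∀ Δ : ℝ, 0 < Δ → 0 ≤ W (fun t => chiHat ((c - 1) / 24) (Δ / 2) t.1))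
    (hcc : ∀ h : ℝ, γ ≤ h → W (fun t => chiHat ((c - 1) / 24) h (1 / t.1)) ≤ 0)
    (v : ℝ)
    (hv : v = W (fun t => chiVac ((c - 1) / 24) (1 / t.1)) /
              W (fun t => chiVac ((c - 1) / 24) t.1))
    (hvpos : 0 < v)
    (W' : ({t : ℝ // 0 < t} → ℝ) →ₗ[ℝ] ℝ)
    (hW' : ∀ f : {t : ℝ // 0 < t} → ℝ,
      W' f = -W (fun t => f ⟨1 / t.1, div_pos one_pos t.2⟩)) :
    (0 < -W' (fun t => chiVac ((c - 1) / 24) t.1)) ∧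
    (∀ Δ : ℝ, 2 * γ ≤ Δ → 0 ≤ W' (fun t => chiHat ((c - 1) / 24) (Δ / 2) t.1)) ∧
    (∀ h : ℝ, 0 < h → W' (fun t => chiHat ((c - 1) / 24) h (1 / t.1)) ≤ 0) ∧
    (-W' (fun t => chiVac ((c - 1) / 24) (1 / t.1))) /
        (-W' (fun t => chiVac ((c - 1) / 24) t.1)) = 1 / v := by
  set A := (c - 1) / 24 with hA
  have key1 : (fun t : {t : ℝ // 0 < t} => chiVac A (1 / (1 / t.1)))
      = (fun t : {t : ℝ // 0 < t} => chiVac A t.1) := by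
    funext t; rw [one_div_one_div]
  have key2 : ∀ h : ℝ, (fun t : {t : ℝ // 0 < t} => chiHat A h (1 / (1 / t.1)))
      = (fun t : {t : ℝ // 0 < t} => chiHat A h t.1) := by
    intro h; funext t; rw [one_div_one_div]
  have hvinv : 0 < W (fun t => chiVac A (1 / t.1)) := by
    rw [hv] at hvpos
    rcases div_pos_iff.mp hvpos with ⟨h1, _⟩ | ⟨_, h2⟩
    · exact h1
    · linarith
  refine ⟨?_, ?_, ?_, ?_⟩
  · rw [hW']
    simpa using hvinv
  · intro Δ hΔ
    rw [hW']
    simp only [neg_nonneg]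
    exact hcc (Δ / 2) (by linarith)
  · intro h hh
    rw [hW']
    simp only [one_div_one_div]
    have := hb (2 * h) (by linarith)
    rw [show (2 * h) / 2 = h by ring] at this
    linarith
  · rw [hW', hW']
    simp only [one_div_one_div, neg_neg]
    rw [hv, one_div_div]
end

section
/- Let F and G be holomorphic functions on the upper half-plane ℍ = {τ ∈ ℂ : Im τ > 0} that are invariant under the Möbius action of SL(2, ℤ), i.e. F((aτ+b)/(cτ+d)) = F(τ) for every [[a,b],[c,d]] ∈ SL(2, ℤ) and likewise for G. Suppose there exist complex sequences (a_n)_{n≥1} and (b_n)_{n≥1} such that for every τ ∈ ℍ the series below converge absolutely and F(τ) = e^{−2πiτ} + Σ_{n≥1} a_n·e^{2πinτ}, G(τ) = e^{−2πiτ} + Σ_{n≥1} b_n·e^{2πinτ} (in particular neither expansion has a constant term). Then F = G. (This is the uniqueness of an SL(2, ℤ)-invariant holomorphic function with Fourier expansion q^{−1} + O(q); the unique such function is j(τ) − 744.) -/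
/-!
The polar terms `q⁻¹` cancel in `H = F - G`, which leaves a holomorphic `SL(2, ℤ)`-invariant
function whose expansion has no constant term, so `H → 0` at `i∞`. Thus `H` is a level-one
modular form of weight `0`, hence constant, and the constant is that limit `0`.
-/

open Complex UpperHalfPlane Filter Topology ModularForm
open scoped Manifold Real MatrixGroups

theorem tendsto_tsum_mul_pow_succ_nhds_zero {c : ℕ → ℂ} {r : ℝ} (hr : 0 < r)
    (hc : Summable fun n ↦ ‖c (n + 1)‖ * r ^ (n + 1)) :
    Tendsto (fun q : ℂ ↦ ∑' n, c (n + 1) * q ^ (n + 1)) (𝓝 0) (𝓝 0) := by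
  have hterm (n : ℕ) : Tendsto (fun q : ℂ ↦ c (n + 1) * q ^ (n + 1)) (𝓝 0) (𝓝 0) := by
    simpa using ((continuous_pow (n + 1)).const_mul (c (n + 1))).tendsto (0 : ℂ)
  have hbound : ∀ᶠ q : ℂ in 𝓝 0, ∀ n, ‖c (n + 1) * q ^ (n + 1)‖ ≤ ‖c (n + 1)‖ * r ^ (n + 1) := by
    filter_upwards [Metric.closedBall_mem_nhds (0 : ℂ) hr] with q hq n
    rw [norm_mul, norm_pow]
    gcongr
    exact mem_closedBall_zero_iff.mp hq
  simpa using tendsto_tsum_of_dominated_convergence hc hterm hbound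

theorem exp_two_pi_I_succ_mul_eq_qParam_pow (n : ℕ) (z : ℂ) :
    exp (2 * π * Complex.I * (n + 1) * z) = Function.Periodic.qParam 1 z ^ (n + 1) := by
  rw [Function.Periodic.qParam, ← exp_nat_mul]
  push_cast
  ring_nf

theorem isZeroAtImInfty_tsum_mul_exp_succ {c : ℕ → ℂ} (τ₀ : ℍ)
    (hc : Summable fun n ↦ ‖c (n + 1) * exp (2 * π * Complex.I * (n + 1) * (τ₀ : ℂ))‖) :
    IsZeroAtImInfty fun τ : ℍ ↦
      ∑' n, c (n + 1) * exp (2 * π * Complex.I * (n + 1) * (τ : ℂ)) := by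
  simp only [exp_two_pi_I_succ_mul_eq_qParam_pow, norm_mul, norm_pow] at hc ⊢
  exact (tendsto_tsum_mul_pow_succ_nhds_zero (norm_pos_iff.mpr
    (Function.Periodic.qParam_ne_zero _)) hc).comp (qParam_tendsto_atImInfty one_pos)

theorem slash_zero_eq_self_of_SL2Z_invariant {f : ℍ → ℂ}
    (hf : ∀ (γ : SL(2, ℤ)) τ, f (γ • τ) = f τ) (γ : SL(2, ℤ)) : f ∣[(0 : ℤ)] γ = f := by
  ext τ
  simp only [SL_slash_apply, neg_zero, zpow_zero, mul_one, hf]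

def ModularForm.ofSL2ZInvariant {f : ℍ → ℂ} (hf : MDifferentiable 𝓘(ℂ) 𝓘(ℂ) f)
    (hinv : ∀ (γ : SL(2, ℤ)) τ, f (γ • τ) = f τ) (hbdd : IsBoundedAtImInfty f) :
    ModularForm 𝒮ℒ 0 where
  toFun := f
  slash_action_eq' := fun _ ⟨γ, hγ⟩ ↦ hγ ▸ slash_zero_eq_self_of_SL2Z_invariant hinv γ
  holo' := hf
  bdd_at_cusps' hc := (OnePoint.isBoundedAt_iff_forall_SL2Z hc).mpr fun γ _ ↦
    (slash_zero_eq_self_of_SL2Z_invariant hinv γ).symm ▸ hbdd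

theorem exists_eq_const_of_SL2Z_invariant {f : ℍ → ℂ} (hf : MDifferentiable 𝓘(ℂ) 𝓘(ℂ) f)
    (hinv : ∀ (γ : SL(2, ℤ)) τ, f (γ • τ) = f τ) (hbdd : IsBoundedAtImInfty f) :
    ∃ c, f = Function.const ℍ c :=
  ModularFormClass.levelOne_weight_zero_const (ModularForm.ofSL2ZInvariant hf hinv hbdd)

/-- **Uniqueness of an `SL(2, ℤ)`-invariant holomorphic function on the upper half-plane
with Fourier expansion `q⁻¹ + O(q)` (no constant term).**
If `F` and `G` are holomorphic on `ℍ`, invariant under the Möbius action of `SL(2, ℤ)`, and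
each admits an absolutely convergent expansion `e^{−2πiτ} + Σ_{n≥1} c_n e^{2πinτ}`, then
`F = G`. (The unique such function is `j(τ) − 744`.) -/
theorem SL2Z_invariant_qexpansion_unique
    (F G : UpperHalfPlane → ℂ)
    (hF : MDifferentiable 𝓘(ℂ) 𝓘(ℂ) F) (hG : MDifferentiable 𝓘(ℂ) 𝓘(ℂ) G)
    (hFinv : ∀ (γ : Matrix.SpecialLinearGroup (Fin 2) ℤ) (τ : UpperHalfPlane),
      F (γ • τ) = F τ)
    (hGinv : ∀ (γ : Matrix.SpecialLinearGroup (Fin 2) ℤ) (τ : UpperHalfPlane),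
      G (γ • τ) = G τ)
    (a b : ℕ → ℂ)
    (haSum : ∀ τ : UpperHalfPlane,
      Summable fun n : ℕ => ‖a (n + 1) * Complex.exp (2 * π * Complex.I * (n + 1) * (τ : ℂ))‖)
    (hbSum : ∀ τ : UpperHalfPlane,
      Summable fun n : ℕ => ‖b (n + 1) * Complex.exp (2 * π * Complex.I * (n + 1) * (τ : ℂ))‖)
    (hFexp : ∀ τ : UpperHalfPlane,
      F τ = Complex.exp (-(2 * π * Complex.I * (τ : ℂ)))
        + ∑' n : ℕ, a (n + 1) * Complex.exp (2 * π * Complex.I * (n + 1) * (τ : ℂ)))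
    (hGexp : ∀ τ : UpperHalfPlane,
      G τ = Complex.exp (-(2 * π * Complex.I * (τ : ℂ)))
        + ∑' n : ℕ, b (n + 1) * Complex.exp (2 * π * Complex.I * (n + 1) * (τ : ℂ))) :
    F = G := by
  have hlim : IsZeroAtImInfty (F - G) := by
    have hdiff := (isZeroAtImInfty_tsum_mul_exp_succ I (haSum I)).sub
      (isZeroAtImInfty_tsum_mul_exp_succ I (hbSum I))
    rw [sub_zero] at hdiff
    refine hdiff.congr fun τ ↦ ?_
    rw [Pi.sub_apply, hFexp, hGexp, add_sub_add_left_eq_sub]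
  obtain ⟨c, hc⟩ := exists_eq_const_of_SL2Z_invariant (hF.sub hG)
    (fun γ τ ↦ by simp only [Pi.sub_apply, hFinv, hGinv]) hlim.isBoundedAtImInfty
  have hc0 : c = 0 := tendsto_nhds_unique (hc ▸ tendsto_const_nhds) hlim
  rw [← sub_eq_zero, hc, hc0, Function.const_zero]
end
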